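/- arXiv:1405.3500 — 5 statements merged into one kernel-verified Lean document; each statement's English description precedes it below -/
import Mathlib

section
/- Let G(x,t) and F(x,t) be m×m complex matrix functions defined on the semi-strip 𝒟 = {(x,t) : 0 ≤ x < ∞, 0 ≤ t < a} such that the partial derivatives G_t and F_x exist on 𝒟, such that G, G_t and F are continuous in (x,t) on 𝒟, and such that the zero curvature equation G_t − F_x + [G, F] = 0 holds on 𝒟 (where [G,F] := GF − FG). Let u(x,t) be the solution of u_x = G u with u(0,t) = I_m, and let R(x,t) be the solution of R_t = F R with R(x,0) = I_m. Then the equality u(x,t) R(0,t) = R(x,t) u(x,0) holds on 𝒟; moreover R(0,t) is invertible and u admits the factorization u(x,t) = R(x,t) u(x,0) R(0,t)^{-1}. -/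
/-! The zero curvature equation says exactly that `P(x) = F(x,t) u(x,t) - u(x,t) F(0,t)` solves
the variational equation `P_x = G P + G_t u`, `P(0) = 0`, of the system `u_x = G u` with respect
to the parameter `t`. A Grönwall estimate, uniform in `x` on the compact interval `[0,x]`, then
shows that `u` is differentiable in `t` with `u_t = P`. Hence `u(x,t) R(0,t)` and
`R(x,t) u(x,0)` both solve `Z_t = F(x,t) Z` and agree at `t = 0`, so they coincide by uniqueness
for linear ODEs. Uniqueness backwards in time shows that `R(0,t) N = 0` forces
`N = R(0,0) N = 0`, so `R(0,t)` is invertible. -/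

open Matrix Set

open Filter Topology

theorem gronwallBound_zero_left (K ε x : ℝ) :
    gronwallBound 0 K ε x = ε * gronwallBound 0 K 1 x := by
  unfold gronwallBound; split_ifs <;> ring

theorem gronwallBound_zero_left_one_nonneg {K x : ℝ} (hK : 0 ≤ K) (hx : 0 ≤ x) :
    0 ≤ gronwallBound 0 K 1 x := by
  simpa [gronwallBound_x0] using gronwallBound_mono le_rfl zero_le_one hK hx

theorem norm_le_gronwallBound_of_hasDerivWithinAt_Icc {E : Type*} [NormedAddCommGroup E]
    [NormedSpace ℝ E] {f f' : ℝ → E} {K ε b : ℝ}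
    (hf : ∀ y ∈ Icc 0 b, HasDerivWithinAt f (f' y) (Icc 0 b) y)
    (bound : ∀ y ∈ Icc 0 b, ‖f' y‖ ≤ K * ‖f y‖ + ε) (h0 : f 0 = 0) (hb : 0 ≤ b) :
    ‖f b‖ ≤ gronwallBound 0 K ε b := by
  simpa using norm_le_gronwallBound_of_norm_deriv_right_le
    (fun y hy => (hf y hy).continuousWithinAt)
    (fun y hy => (hf y (Ico_subset_Icc_self hy)).mono_of_mem_nhdsWithin (Icc_mem_nhdsGE_of_mem hy))
    (by simp [h0]) (fun y hy => bound y (Ico_subset_Icc_self hy)) b ⟨hb, le_rfl⟩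

theorem IsCompact.tendstoUniformlyOn_of_continuousOn_prod {α β E : Type*} [TopologicalSpace α]
    [TopologicalSpace β] [UniformSpace E] {f : α → β → E} {k : Set α} {s : Set β} {t : β}
    (hk : IsCompact k) (hf : ContinuousOn (Function.uncurry f) (k ×ˢ s)) (ht : t ∈ s) :
    TendstoUniformlyOn (fun b a => f a b) (f · t) (𝓝[s] t) k := by
  intro U hU
  obtain ⟨V, hV, hVU⟩ := hk.mem_uniformity_of_prod (f := fun b a => f a b)
    (hf.comp continuous_swap.continuousOn fun p hp => ⟨hp.2, hp.1⟩) ht (symm_le_uniformity hU)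
  exact Filter.mem_of_superset hV fun b hb a ha => hVU b hb a ha

theorem eventually_norm_sub_sub_smul_le {α E : Type*} [NormedAddCommGroup E] [NormedSpace ℝ E]
    {f f' : α → ℝ → E} {k : Set α} {s : Set ℝ} {t : ℝ} (hs : s.OrdConnected) (ht : t ∈ s)
    (hf : ∀ x ∈ k, ∀ σ ∈ s, HasDerivWithinAt (f x) (f' x σ) s σ)
    (hf' : TendstoUniformlyOn (fun σ x => f' x σ) (f' · t) (𝓝[s] t) k) {ε : ℝ} (hε : 0 < ε) :
    ∀ᶠ σ in 𝓝[s] t, ∀ x ∈ k, ‖f x σ - f x t - (σ - t) • f' x t‖ ≤ ε * |σ - t| := by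
  obtain ⟨δ, hδ, hδs⟩ := Metric.mem_nhdsWithin_iff.1 (Metric.tendstoUniformlyOn_iff.1 hf' ε hε)
  filter_upwards [inter_mem_nhdsWithin s (Metric.ball_mem_nhds t hδ)] with σ hσ x hx
  have hseg : uIcc t σ ⊆ Metric.ball t δ ∩ s := fun τ hτ =>
    ⟨(abs_sub_left_of_mem_uIcc hτ).trans_lt (Metric.mem_ball.1 hσ.2),
      hs.uIcc_subset ht hσ.1 hτ⟩
  have hderiv : ∀ τ ∈ uIcc t σ,
      HasDerivWithinAt (fun τ => f x τ - τ • f' x t) (f' x τ - f' x t) (uIcc t σ) τ :=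
    fun τ hτ => (((hf x hx τ (hseg hτ).2).mono fun _ h => (hseg h).2).sub
      ((hasDerivAt_id τ).smul_const (f' x t)).hasDerivWithinAt).congr_deriv (by simp)
  have hbound : ∀ τ ∈ uIcc t σ, ‖f' x τ - f' x t‖ ≤ ε := fun τ hτ => by
    rw [← dist_eq_norm, dist_comm]; exact (hδs (hseg hτ) x hx).le
  have := (convex_uIcc t σ).norm_image_sub_le_of_norm_hasDerivWithin_le hderiv hbound
    left_mem_uIcc right_mem_uIcc
  rw [Real.norm_eq_abs] at this
  convert this using 2
  rw [sub_smul]; abel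

section LinearODE

variable {A : Type*} [NormedRing A]

theorem lipschitzOnWith_mul_left_of_norm_le {M : A} {C : ℝ} (h : ‖M‖ ≤ C) (s : Set A) :
    LipschitzOnWith C.toNNReal (M * ·) s :=
  ((lipschitzWith_smul M).weaken <| by
    rw [← NNReal.coe_le_coe, coe_nnnorm]; exact h.trans (Real.le_coe_toNNReal C)).lipschitzOnWith

variable [NormedAlgebra ℝ A]

theorem eqOn_Icc_of_hasDerivWithinAt_mul_left {F Y Z : ℝ → A} {a b : ℝ}
    (hF : ContinuousOn F (Icc a b))
    (hY : ∀ s ∈ Icc a b, HasDerivWithinAt Y (F s * Y s) (Icc a b) s)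
    (hZ : ∀ s ∈ Icc a b, HasDerivWithinAt Z (F s * Z s) (Icc a b) s) (ha : Y a = Z a) :
    EqOn Y Z (Icc a b) := by
  obtain ⟨C, hC⟩ := isCompact_Icc.exists_bound_of_continuousOn hF
  have hright {W : ℝ → A} (hW : ∀ s ∈ Icc a b, HasDerivWithinAt W (F s * W s) (Icc a b) s)
      (s : ℝ) (hs : s ∈ Ico a b) : HasDerivWithinAt W (F s * W s) (Ici s) s :=
    (hW s (Ico_subset_Icc_self hs)).mono_of_mem_nhdsWithin (Icc_mem_nhdsGE_of_mem hs)
  exact ODE_solution_unique_of_mem_Icc_right (s := fun _ => univ)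
    (fun s hs => lipschitzOnWith_mul_left_of_norm_le (hC s (Ico_subset_Icc_self hs)) univ)
    (fun s hs => (hY s hs).continuousWithinAt) (hright hY) (fun _ _ => mem_univ _)
    (fun s hs => (hZ s hs).continuousWithinAt) (hright hZ) (fun _ _ => mem_univ _) ha

theorem eqOn_Icc_of_hasDerivWithinAt_mul_left_of_eq_right {F Y Z : ℝ → A} {a b : ℝ}
    (hF : ContinuousOn F (Icc a b))
    (hY : ∀ s ∈ Icc a b, HasDerivWithinAt Y (F s * Y s) (Icc a b) s)
    (hZ : ∀ s ∈ Icc a b, HasDerivWithinAt Z (F s * Z s) (Icc a b) s) (hb : Y b = Z b) :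
    EqOn Y Z (Icc a b) := by
  obtain ⟨C, hC⟩ := isCompact_Icc.exists_bound_of_continuousOn hF
  have hleft {W : ℝ → A} (hW : ∀ s ∈ Icc a b, HasDerivWithinAt W (F s * W s) (Icc a b) s)
      (s : ℝ) (hs : s ∈ Ioc a b) : HasDerivWithinAt W (F s * W s) (Iic s) s :=
    (hW s (Ioc_subset_Icc_self hs)).mono_of_mem_nhdsWithin (Icc_mem_nhdsLE_of_mem hs)
  exact ODE_solution_unique_of_mem_Icc_left (s := fun _ => univ)
    (fun s hs => lipschitzOnWith_mul_left_of_norm_le (hC s (Ioc_subset_Icc_self hs)) univ)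
    (fun s hs => (hY s hs).continuousWithinAt) (hleft hY) (fun _ _ => mem_univ _)
    (fun s hs => (hZ s hs).continuousWithinAt) (hleft hZ) (fun _ _ => mem_univ _) hb

theorem isLeftRegular_of_hasDerivWithinAt_mul_left {F R : ℝ → A} {a b : ℝ} (hab : a ≤ b)
    (hF : ContinuousOn F (Icc a b))
    (hR : ∀ s ∈ Icc a b, HasDerivWithinAt R (F s * R s) (Icc a b) s) (ha : IsLeftRegular (R a)) :
    IsLeftRegular (R b) := by
  refine isLeftRegular_iff_right_eq_zero_of_mul.2 fun N hN => ?_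
  have hRN : ∀ s ∈ Icc a b, HasDerivWithinAt (R · * N) (F s * (R s * N)) (Icc a b) s :=
    fun s hs => ((hR s hs).mul_const N).congr_deriv (mul_assoc _ _ _)
  have hzero : ∀ s ∈ Icc a b, HasDerivWithinAt (fun _ => (0 : A)) (F s * 0) (Icc a b) s :=
    fun s _ => (hasDerivWithinAt_const s _ 0).congr_deriv (mul_zero _).symm
  exact isLeftRegular_iff_right_eq_zero_of_mul.1 ha N
    (eqOn_Icc_of_hasDerivWithinAt_mul_left_of_eq_right hF hRN hzero hN ⟨le_rfl, hab⟩)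

/- The remainder `Δ = u(·,s) - u(·,t) - (s - t) P` solves `Δ' = G(·,s) Δ + r` with
`‖r‖ ≤ ε (cu + cP) |s - t|`, so Grönwall bounds it. -/
theorem norm_sub_sub_smul_le_of_linearODE {G u : ℝ → ℝ → A} {G' P : ℝ → A}
    {s t X K ε cu cP : ℝ} (hX : 0 ≤ X)
    (hus : ∀ y ∈ Icc 0 X, HasDerivWithinAt (u · s) (G y s * u y s) (Icc 0 X) y)
    (hut : ∀ y ∈ Icc 0 X, HasDerivWithinAt (u · t) (G y t * u y t) (Icc 0 X) y)
    (hu0 : u 0 s = u 0 t)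
    (hP : ∀ y ∈ Icc 0 X, HasDerivWithinAt P (G y t * P y + G' y * u y t) (Icc 0 X) y)
    (hP0 : P 0 = 0) (hK : ∀ y ∈ Icc 0 X, ‖G y s‖ ≤ K)
    (hG : ∀ y ∈ Icc 0 X, ‖G y s - G y t‖ ≤ ε)
    (hG' : ∀ y ∈ Icc 0 X, ‖G y s - G y t - (s - t) • G' y‖ ≤ ε * |s - t|)
    (hcu : ∀ y ∈ Icc 0 X, ‖u y t‖ ≤ cu) (hcP : ∀ y ∈ Icc 0 X, ‖P y‖ ≤ cP) :
    ‖u X s - u X t - (s - t) • P X‖ ≤ ε * (cu + cP) * |s - t| * gronwallBound 0 K 1 X := by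
  have hε : 0 ≤ ε := (norm_nonneg _).trans (hG 0 ⟨le_rfl, hX⟩)
  set Δ := fun y => u y s - u y t - (s - t) • P y
  have hΔ : ∀ y ∈ Icc 0 X, HasDerivWithinAt Δ (G y s * Δ y
      + (G y s - G y t - (s - t) • G' y) * u y t + (s - t) • ((G y s - G y t) * P y))
      (Icc 0 X) y := fun y hy => by
    refine (((hus y hy).sub (hut y hy)).sub ((hP y hy).const_smul (s - t))).congr_deriv ?_
    simp only [Δ, smul_sub, smul_add, mul_sub, sub_mul, mul_smul_comm, smul_mul_assoc]
    abel
  have hbound : ∀ y ∈ Icc 0 X, ‖G y s * Δ y + (G y s - G y t - (s - t) • G' y) * u y t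
      + (s - t) • ((G y s - G y t) * P y)‖ ≤ K * ‖Δ y‖ + ε * (cu + cP) * |s - t| := by
    intro y hy
    calc _ ≤ ‖G y s * Δ y‖ + ‖(G y s - G y t - (s - t) • G' y) * u y t‖
          + ‖(s - t) • ((G y s - G y t) * P y)‖ := norm_add₃_le
      _ ≤ K * ‖Δ y‖ + ε * |s - t| * cu + |s - t| * (ε * cP) := by
        gcongr
        · exact (norm_mul_le _ _).trans (by gcongr; exact hK y hy)
        · exact (norm_mul_le _ _).trans
            (mul_le_mul (hG' y hy) (hcu y hy) (norm_nonneg _) (by positivity))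
        · rw [norm_smul, Real.norm_eq_abs]
          exact mul_le_mul_of_nonneg_left ((norm_mul_le _ _).trans
            (mul_le_mul (hG y hy) (hcP y hy) (norm_nonneg _) hε)) (abs_nonneg _)
      _ = K * ‖Δ y‖ + ε * (cu + cP) * |s - t| := by ring
  calc ‖u X s - u X t - (s - t) • P X‖ = ‖Δ X‖ := rfl
    _ ≤ gronwallBound 0 K (ε * (cu + cP) * |s - t|) X :=
      norm_le_gronwallBound_of_hasDerivWithinAt_Icc hΔ hbound (by simp [Δ, hu0, hP0]) hX
    _ = _ := gronwallBound_zero_left _ _ _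

theorem hasDerivWithinAt_of_linearODE_param {G u : ℝ → ℝ → A} {G' P : ℝ → A} {S : Set ℝ}
    {t X : ℝ} (ht : t ∈ S) (hX : 0 ≤ X)
    (hu : ∀ᶠ s in 𝓝[S] t, ∀ y ∈ Icc 0 X, HasDerivWithinAt (u · s) (G y s * u y s) (Icc 0 X) y)
    (hu0 : ∀ᶠ s in 𝓝[S] t, u 0 s = u 0 t)
    (hP : ∀ y ∈ Icc 0 X, HasDerivWithinAt P (G y t * P y + G' y * u y t) (Icc 0 X) y)
    (hP0 : P 0 = 0) (hGc : ContinuousOn (G · t) (Icc 0 X))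
    (hG : TendstoUniformlyOn (fun s y => G y s) (G · t) (𝓝[S] t) (Icc 0 X))
    (hG' : ∀ ε > 0, ∀ᶠ s in 𝓝[S] t, ∀ y ∈ Icc 0 X,
      ‖G y s - G y t - (s - t) • G' y‖ ≤ ε * |s - t|) :
    HasDerivWithinAt (u X) (P X) S t := by
  have hut := hu.self_of_nhdsWithin ht
  have h0X : (0 : ℝ) ∈ Icc 0 X := ⟨le_rfl, hX⟩
  obtain ⟨cu, hcu⟩ := isCompact_Icc.exists_bound_of_continuousOn
    fun y hy => (hut y hy).continuousWithinAt
  obtain ⟨cP, hcP⟩ := isCompact_Icc.exists_bound_of_continuousOn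
    fun y hy => (hP y hy).continuousWithinAt
  obtain ⟨cG, hcG⟩ := isCompact_Icc.exists_bound_of_continuousOn hGc
  have hcu0 : 0 ≤ cu := (norm_nonneg _).trans (hcu 0 h0X)
  have hcP0 : 0 ≤ cP := (norm_nonneg _).trans (hcP 0 h0X)
  have hB : 0 ≤ gronwallBound 0 (cG + 1) 1 X :=
    gronwallBound_zero_left_one_nonneg (by linarith [(norm_nonneg _).trans (hcG 0 h0X)]) hX
  rw [hasDerivWithinAt_iff_isLittleO, Asymptotics.isLittleO_iff]
  intro c hc
  set ε := c / ((cu + cP) * gronwallBound 0 (cG + 1) 1 X + 1)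
  have hε : 0 < ε := by positivity
  have hεc : ε * (cu + cP) * gronwallBound 0 (cG + 1) 1 X ≤ c := by
    rw [mul_assoc, div_mul_eq_mul_div, div_le_iff₀ (by positivity)]
    nlinarith
  filter_upwards [hu, hu0, Metric.tendstoUniformlyOn_iff.1 hG 1 one_pos,
    Metric.tendstoUniformlyOn_iff.1 hG ε hε, hG' ε hε] with s hus hus0 hG1 hGε hG'ε
  have hdist : ∀ {δ}, (∀ y ∈ Icc 0 X, dist (G y t) (G y s) < δ) →
      ∀ y ∈ Icc 0 X, ‖G y s - G y t‖ ≤ δ := fun h y hy => by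
    rw [norm_sub_rev, ← dist_eq_norm]; exact (h y hy).le
  have hK : ∀ y ∈ Icc 0 X, ‖G y s‖ ≤ cG + 1 := fun y hy => by
    linarith [norm_le_insert' (G y s) (G y t), hcG y hy, hdist hG1 y hy]
  calc ‖u X s - u X t - (s - t) • P X‖
      ≤ ε * (cu + cP) * |s - t| * gronwallBound 0 (cG + 1) 1 X :=
        norm_sub_sub_smul_le_of_linearODE hX hus hut hus0 hP hP0 hK (hdist hGε) hG'ε hcu hcP
    _ = ε * (cu + cP) * gronwallBound 0 (cG + 1) 1 X * ‖s - t‖ := by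
        rw [Real.norm_eq_abs]; ring
    _ ≤ c * ‖s - t‖ := by gcongr

end LinearODE

theorem hasDerivWithinAt_time_of_zeroCurvature {A : Type*} [NormedRing A] [NormedAlgebra ℝ A]
    {a : ℝ} {G F Gt Fx u : ℝ → ℝ → A}
    (hGt : ∀ x ∈ Ici (0 : ℝ), ∀ t ∈ Ico 0 a, HasDerivWithinAt (G x) (Gt x t) (Ico 0 a) t)
    (hFx : ∀ x ∈ Ici (0 : ℝ), ∀ t ∈ Ico 0 a, HasDerivWithinAt (F · t) (Fx x t) (Ici 0) x)
    (hGc : ContinuousOn (Function.uncurry G) (Ici 0 ×ˢ Ico 0 a))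
    (hGtc : ContinuousOn (Function.uncurry Gt) (Ici 0 ×ˢ Ico 0 a))
    (hzc : ∀ x ∈ Ici (0 : ℝ), ∀ t ∈ Ico 0 a,
      Gt x t - Fx x t + (G x t * F x t - F x t * G x t) = 0)
    (hu0 : ∀ t ∈ Ico 0 a, u 0 t = 1)
    (hux : ∀ x ∈ Ici (0 : ℝ), ∀ t ∈ Ico 0 a,
      HasDerivWithinAt (u · t) (G x t * u x t) (Ici 0) x)
    {x t : ℝ} (hx : x ∈ Ici 0) (ht : t ∈ Ico 0 a) :
    HasDerivWithinAt (u x) (F x t * u x t - u x t * F 0 t) (Ico 0 a) t := by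
  have hIcc : Icc 0 x ⊆ Ici (0 : ℝ) := Icc_subset_Ici_self
  have hrect : Icc 0 x ×ˢ Ico 0 a ⊆ Ici (0 : ℝ) ×ˢ Ico 0 a := prod_mono hIcc subset_rfl
  have hvar : ∀ y ∈ Icc 0 x, HasDerivWithinAt (fun y => F y t * u y t - u y t * F 0 t)
      (G y t * (F y t * u y t - u y t * F 0 t) + Gt y t * u y t) (Icc 0 x) y := by
    intro y hy
    have hGt_eq : Gt y t = Fx y t - (G y t * F y t - F y t * G y t) := by
      rw [← sub_eq_zero, ← hzc y (hIcc hy) t ht]; abel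
    refine ((((hFx y (hIcc hy) t ht).mul (hux y (hIcc hy) t ht)).sub
      ((hux y (hIcc hy) t ht).mul_const (F 0 t))).mono hIcc).congr_deriv ?_
    rw [hGt_eq]; noncomm_ring
  exact hasDerivWithinAt_of_linearODE_param (G' := (Gt · t)) ht hx
    (eventually_mem_nhdsWithin.mono fun s hs y hy => (hux y (hIcc hy) s hs).mono hIcc)
    (eventually_mem_nhdsWithin.mono fun s hs => by rw [hu0 s hs, hu0 t ht])
    hvar (by simp [hu0 t ht])
    (hGc.comp (Continuous.prodMk_left t).continuousOn fun y hy => ⟨hIcc hy, ht⟩)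
    (isCompact_Icc.tendstoUniformlyOn_of_continuousOn_prod (hGc.mono hrect) ht)
    fun ε hε => eventually_norm_sub_sub_smul_le ordConnected_Ico ht
      (fun y hy s hs => hGt y (hIcc hy) s hs)
      (isCompact_Icc.tendstoUniformlyOn_of_continuousOn_prod (hGtc.mono hrect) ht) hε

theorem continuousOn_matrix {α R l n : Type*} [TopologicalSpace α] [TopologicalSpace R]
    {f : α → Matrix l n R} {s : Set α} (h : ∀ i j, ContinuousOn (fun a => f a i j) s) :
    ContinuousOn f s :=
  continuousOn_pi.2 fun i => continuousOn_pi.2 (h i)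

attribute [local instance] Matrix.linftyOpNormedRing Matrix.linftyOpNormedAlgebra

theorem hasDerivWithinAt_matrix {n : Type*} [Fintype n] {f : ℝ → Matrix n n ℂ}
    {f' : Matrix n n ℂ} {s : Set ℝ} {y : ℝ}
    (h : ∀ i j, HasDerivWithinAt (fun x => f x i j) (f' i j) s y) : HasDerivWithinAt f f' s y :=
  hasDerivWithinAt_pi.2 fun i => hasDerivWithinAt_pi.2 (h i)

theorem zero_curvature_factorization_general
    {m : ℕ} (a : ℝ)
    (G F Gt Fx u R : ℝ → ℝ → Matrix (Fin m) (Fin m) ℂ)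
    -- G_t exists on 𝒟
    (hGt : ∀ x ∈ Ici (0:ℝ), ∀ t ∈ Ico (0:ℝ) a, ∀ i j,
      HasDerivWithinAt (fun s => G x s i j) (Gt x t i j) (Ico (0:ℝ) a) t)
    -- F_x exists on 𝒟
    (hFx : ∀ x ∈ Ici (0:ℝ), ∀ t ∈ Ico (0:ℝ) a, ∀ i j,
      HasDerivWithinAt (fun y => F y t i j) (Fx x t i j) (Ici (0:ℝ)) x)
    -- G, G_t and F are continuous in (x,t) on 𝒟
    (hGcont : ∀ i j, ContinuousOn (fun p : ℝ × ℝ => G p.1 p.2 i j) (Ici 0 ×ˢ Ico 0 a))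
    (hGtcont : ∀ i j, ContinuousOn (fun p : ℝ × ℝ => Gt p.1 p.2 i j) (Ici 0 ×ˢ Ico 0 a))
    (hFcont : ∀ i j, ContinuousOn (fun p : ℝ × ℝ => F p.1 p.2 i j) (Ici 0 ×ˢ Ico 0 a))
    -- the zero curvature equation G_t − F_x + [G,F] = 0 on 𝒟
    (hzc : ∀ x ∈ Ici (0:ℝ), ∀ t ∈ Ico (0:ℝ) a,
      Gt x t - Fx x t + (G x t * F x t - F x t * G x t) = 0)
    -- u solves u_x = G u with u(0,t) = I
    (hu0 : ∀ t ∈ Ico (0:ℝ) a, u 0 t = 1)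
    (hux : ∀ x ∈ Ici (0:ℝ), ∀ t ∈ Ico (0:ℝ) a, ∀ i j,
      HasDerivWithinAt (fun y => u y t i j) ((G x t * u x t) i j) (Ici (0:ℝ)) x)
    -- R solves R_t = F R with R(x,0) = I
    (hR0 : ∀ x ∈ Ici (0:ℝ), R x 0 = 1)
    (hRt : ∀ x ∈ Ici (0:ℝ), ∀ t ∈ Ico (0:ℝ) a, ∀ i j,
      HasDerivWithinAt (fun s => R x s i j) ((F x t * R x t) i j) (Ico (0:ℝ) a) t) :
    ∀ x ∈ Ici (0:ℝ), ∀ t ∈ Ico (0:ℝ) a,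
      u x t * R 0 t = R x t * u x 0 ∧ IsUnit (R 0 t) ∧
      u x t = R x t * u x 0 * (R 0 t)⁻¹ := by
  have hFc : ContinuousOn (Function.uncurry F) (Ici 0 ×ˢ Ico 0 a) := continuousOn_matrix hFcont
  have hRt' x hx t ht := hasDerivWithinAt_matrix (hRt x hx t ht)
  intro x hx t ht
  have hsub : Icc 0 t ⊆ Ico 0 a := fun s hs => ⟨hs.1, hs.2.trans_lt ht.2⟩
  have hFc' {y} (hy : y ∈ Ici (0 : ℝ)) : ContinuousOn (F y) (Icc 0 t) :=
    hFc.comp (Continuous.prodMk_right y).continuousOn fun s hs => ⟨hy, hsub hs⟩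
  have hut s (hs : s ∈ Icc 0 t) := hasDerivWithinAt_time_of_zeroCurvature
    (fun x hx t ht => hasDerivWithinAt_matrix (hGt x hx t ht))
    (fun x hx t ht => hasDerivWithinAt_matrix (hFx x hx t ht))
    (continuousOn_matrix hGcont) (continuousOn_matrix hGtcont) hzc hu0
    (fun x hx t ht => hasDerivWithinAt_matrix (hux x hx t ht)) hx (hsub hs)
  have hId : u x t * R 0 t = R x t * u x 0 :=
    eqOn_Icc_of_hasDerivWithinAt_mul_left (hFc' hx)
      (fun s hs => (((hut s hs).mul (hRt' 0 self_mem_Ici s (hsub hs))).mono hsub).congr_deriv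
        (by noncomm_ring))
      (fun s hs => (((hRt' x hx s (hsub hs)).mul_const (u x 0)).mono hsub).congr_deriv
        (mul_assoc _ _ _))
      (by simp [hR0 0 self_mem_Ici, hR0 x hx]) ⟨ht.1, le_rfl⟩
  have hUnit : IsUnit (R 0 t) := IsArtinianRing.isUnit_iff_isLeftRegular.2 <|
    isLeftRegular_of_hasDerivWithinAt_mul_left ht.1 (hFc' self_mem_Ici)
      (fun s hs => (hRt' 0 self_mem_Ici s (hsub hs)).mono hsub)
      (by rw [hR0 0 self_mem_Ici]; exact isRegular_one.left)
  refine ⟨hId, hUnit, ?_⟩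
  rw [← hId, Matrix.mul_nonsing_inv_cancel_right _ _ ((Matrix.isUnit_iff_isUnit_det _).1 hUnit)]

/-- Zero curvature on the semi-strip `𝒟 = [0,∞) × [0,a)` implies
`u(x,t) R(0,t) = R(x,t) u(x,0)`, invertibility of `R(0,t)` and the factorization
`u(x,t) = R(x,t) u(x,0) R(0,t)⁻¹`.  All partial derivatives on the boundary are
one-sided (expressed via `HasDerivWithinAt`). -/
theorem zero_curvature_factorization
    {m : ℕ} (a : ℝ) (ha : 0 < a)
    (G F Gt Fx u R : ℝ → ℝ → Matrix (Fin m) (Fin m) ℂ)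
    -- G_t exists on 𝒟
    (hGt : ∀ x ∈ Ici (0:ℝ), ∀ t ∈ Ico (0:ℝ) a, ∀ i j,
      HasDerivWithinAt (fun s => G x s i j) (Gt x t i j) (Ico (0:ℝ) a) t)
    -- F_x exists on 𝒟
    (hFx : ∀ x ∈ Ici (0:ℝ), ∀ t ∈ Ico (0:ℝ) a, ∀ i j,
      HasDerivWithinAt (fun y => F y t i j) (Fx x t i j) (Ici (0:ℝ)) x)
    -- G, G_t and F are continuous in (x,t) on 𝒟
    (hGcont : ∀ i j, ContinuousOn (fun p : ℝ × ℝ => G p.1 p.2 i j) (Ici 0 ×ˢ Ico 0 a))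
    (hGtcont : ∀ i j, ContinuousOn (fun p : ℝ × ℝ => Gt p.1 p.2 i j) (Ici 0 ×ˢ Ico 0 a))
    (hFcont : ∀ i j, ContinuousOn (fun p : ℝ × ℝ => F p.1 p.2 i j) (Ici 0 ×ˢ Ico 0 a))
    -- the zero curvature equation G_t − F_x + [G,F] = 0 on 𝒟
    (hzc : ∀ x ∈ Ici (0:ℝ), ∀ t ∈ Ico (0:ℝ) a,
      Gt x t - Fx x t + (G x t * F x t - F x t * G x t) = 0)
    -- u solves u_x = G u with u(0,t) = I
    (hu0 : ∀ t ∈ Ico (0:ℝ) a, u 0 t = 1)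
    (hux : ∀ x ∈ Ici (0:ℝ), ∀ t ∈ Ico (0:ℝ) a, ∀ i j,
      HasDerivWithinAt (fun y => u y t i j) ((G x t * u x t) i j) (Ici (0:ℝ)) x)
    -- R solves R_t = F R with R(x,0) = I
    (hR0 : ∀ x ∈ Ici (0:ℝ), R x 0 = 1)
    (hRt : ∀ x ∈ Ici (0:ℝ), ∀ t ∈ Ico (0:ℝ) a, ∀ i j,
      HasDerivWithinAt (fun s => R x s i j) ((F x t * R x t) i j) (Ico (0:ℝ) a) t) :
    ∀ x ∈ Ici (0:ℝ), ∀ t ∈ Ico (0:ℝ) a,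
      u x t * R 0 t = R x t * u x 0 ∧ IsUnit (R 0 t) ∧
      u x t = R x t * u x 0 * (R 0 t)⁻¹ :=
  zero_curvature_factorization_general a G F Gt Fx u R hGt hFx hGcont hGtcont hFcont hzc hu0 hux hR0
    hRt
end

section
/- Let a Dirac system y_x = i(z j + j V(x)) y on [0, ∞) with locally integrable V be given, with normalized fundamental solution u(x,z). Let 𝒫 be an m×m₁ matrix satisfying 𝒫*𝒫 > 0 and 𝒫* j 𝒫 ≥ 0. Then for every x ≥ 0 and every z ∈ ℂ₊ one has det([I_{m₁} 0] u(x,z)^{-1} 𝒫) ≠ 0. -/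
/-!
Liouville's formula gives `det u(x,z) = exp(i z (m₁ - m₂) x) ≠ 0`. Suppose `[I 0] u(x,z)⁻¹ 𝒫 f = 0`
with `f ≠ 0`, and put `η = u(x,z)⁻¹ 𝒫 f`, whose upper block vanishes, so `η* j η = -|η₂|²`. Along
the solution `g(y) = u(y,z) η` the form `g* j g` is nonincreasing, because
`A* j + j A = -2 Im z · I` for the coefficient `A` of the system. Hence
`0 ≤ f* 𝒫* j 𝒫 f = g(x)* j g(x) ≤ g(0)* j g(0) = -|η₂|²`, which forces `η = 0`, i.e. `𝒫 f = 0`,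
contradicting `𝒫*𝒫 > 0`.
-/

open Matrix MeasureTheory Set
open scoped ComplexOrder

/-- `j = diag(I_{m₁}, −I_{m₂})`. -/
noncomputable def jMat (m₁ m₂ : ℕ) : Matrix (Fin m₁ ⊕ Fin m₂) (Fin m₁ ⊕ Fin m₂) ℂ :=
  Matrix.fromBlocks 1 0 0 (-1)

/-- `V = [[0, v],[v*, 0]]` built out of the potential `v`. -/
noncomputable def VMat {m₁ m₂ : ℕ} (v : ℝ → Matrix (Fin m₁) (Fin m₂) ℂ) (x : ℝ) :
    Matrix (Fin m₁ ⊕ Fin m₂) (Fin m₁ ⊕ Fin m₂) ℂ :=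
  Matrix.fromBlocks 0 (v x) (v x)ᴴ 0

noncomputable def detContinuousMultilinearMap (𝕜 n : Type*) [RCLike 𝕜] [Fintype n]
    [DecidableEq n] : ContinuousMultilinearMap 𝕜 (fun _ : n => n → 𝕜) 𝕜 where
  toMultilinearMap := (detRowAlternating : (n → 𝕜) [⋀^n]→ₗ[𝕜] 𝕜).toMultilinearMap
  cont := continuous_id.matrix_det

theorem hasDerivWithinAt_det {𝕜 n : Type*} [RCLike 𝕜] [Fintype n] [DecidableEq n]
    {U : ℝ → Matrix n n 𝕜} {B : Matrix n n 𝕜} {s : Set ℝ} {x : ℝ}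
    (hU : ∀ i k, HasDerivWithinAt (fun y => U y i k) ((B * U x) i k) s x) :
    HasDerivWithinAt (fun y => (U y).det) (B.trace * (U x).det) s x := by
  have hrows : HasDerivWithinAt (fun y => (U y : n → n → 𝕜)) (B * U x) s x :=
    hasDerivWithinAt_pi.2 fun i => hasDerivWithinAt_pi.2 (hU i)
  have hdet := (((detContinuousMultilinearMap 𝕜 n).hasFDerivAt (U x)).restrictScalars ℝ
    ).comp_hasDerivWithinAt x hrows
  have hrow : ∀ i, (B * U x) i = ∑ k, B i k • U x k := fun i => by
    funext l; simp [mul_apply, Finset.sum_apply]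
  have htrace : ∑ i, ((U x).updateRow i ((B * U x) i)).det = B.trace * (U x).det := by
    simp only [hrow, det_updateRow_sum, trace, Finset.sum_mul, smul_eq_mul, diag_apply]
  exact hdet.congr_deriv ((ContinuousMultilinearMap.linearDeriv_apply _ _ _).trans htrace)

theorem eq_exp_mul_of_hasDerivWithinAt {f : ℝ → ℂ} {c : ℂ} {a : ℝ}
    (hf : ∀ x ∈ Ici a, HasDerivWithinAt f (c * f x) (Ici a) x) {x : ℝ} (hx : a ≤ x) :
    f x = Complex.exp (c * (x - a)) * f a := by
  set E : ℝ → ℂ := fun y => Complex.exp (-(c * (y - a))) * f y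
  have hE : ∀ y ∈ Ici a, HasDerivWithinAt E 0 (Ici a) y := fun y hy => by
    have hexp : HasDerivAt (fun t : ℝ => Complex.exp (-(c * (t - a))))
        (Complex.exp (-(c * (y - a))) * -c) y := by
      simpa using ((((hasDerivAt_id y).ofReal_comp).sub_const (a : ℂ)).const_mul c).neg.cexp
    exact (hexp.hasDerivWithinAt.mul (hf y hy)).congr_deriv (by ring)
  have hconst : E x = E a :=
    constant_of_has_deriv_right_zero
      (fun y hy => (hE y hy.1).continuousWithinAt.mono Icc_subset_Ici_self)
      (fun y hy => (hE y hy.1).mono (Ici_subset_Ici.2 hy.1)) x ⟨hx, le_rfl⟩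
  simp only [E, sub_self, mul_zero, neg_zero, Complex.exp_zero, one_mul] at hconst
  rw [← hconst, ← mul_assoc, ← Complex.exp_add, add_neg_cancel, Complex.exp_zero, one_mul]

theorem det_eq_exp_mul_of_hasDerivWithinAt {n : Type*} [Fintype n] [DecidableEq n]
    {U B : ℝ → Matrix n n ℂ} {c : ℂ} {a : ℝ}
    (hU : ∀ x ∈ Ici a, ∀ i k, HasDerivWithinAt (fun y => U y i k) ((B x * U x) i k) (Ici a) x)
    (hB : ∀ x ∈ Ici a, (B x).trace = c) {x : ℝ} (hx : a ≤ x) :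
    (U x).det = Complex.exp (c * (x - a)) * (U a).det :=
  eq_exp_mul_of_hasDerivWithinAt (fun y hy => hB y hy ▸ hasDerivWithinAt_det (hU y hy)) hx

theorem hasDerivWithinAt_mulVec_apply {𝕜 n : Type*} [RCLike 𝕜] [Fintype n]
    {U : ℝ → Matrix n n 𝕜} {B : Matrix n n 𝕜} {s : Set ℝ} {x : ℝ}
    (hU : ∀ i k, HasDerivWithinAt (fun y => U y i k) ((B * U x) i k) s x) (η : n → 𝕜) (i : n) :
    HasDerivWithinAt (fun y => (U y *ᵥ η) i) ((B *ᵥ (U x *ᵥ η)) i) s x := by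
  rw [mulVec_mulVec]
  exact HasDerivWithinAt.fun_sum fun k _ => (hU i k).mul_const (η k)

theorem hasDerivWithinAt_star_dotProduct_mulVec {𝕜 n : Type*} [RCLike 𝕜] [Fintype n]
    (J : Matrix n n 𝕜) {G : ℝ → n → 𝕜} {G' : n → 𝕜} {s : Set ℝ} {x : ℝ}
    (hG : ∀ i, HasDerivWithinAt (fun y => G y i) (G' i) s x) :
    HasDerivWithinAt (fun y => star (G y) ⬝ᵥ (J *ᵥ G y))
      (star G' ⬝ᵥ (J *ᵥ G x) + star (G x) ⬝ᵥ (J *ᵥ G')) s x := by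
  have hJG : ∀ i, HasDerivWithinAt (fun y => (J *ᵥ G y) i) ((J *ᵥ G') i) s x := fun i =>
    HasDerivWithinAt.fun_sum fun k _ => (hG k).const_mul (J i k)
  refine (HasDerivWithinAt.fun_sum (u := Finset.univ) fun i _ =>
    (hG i).star.mul (hJG i)).congr_deriv ?_
  simp only [dotProduct, Pi.star_apply, Finset.sum_add_distrib]

theorem antitoneOn_re_star_dotProduct_mulVec {𝕜 n : Type*} [RCLike 𝕜] [Fintype n]
    {A : ℝ → Matrix n n 𝕜} {J : Matrix n n 𝕜} {g : ℝ → n → 𝕜} {s : Set ℝ} (hs : Convex ℝ s)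
    (hg : ∀ x ∈ s, ∀ i, HasDerivWithinAt (fun y => g y i) ((A x *ᵥ g x) i) s x)
    (hA : ∀ x ∈ s, (-((A x)ᴴ * J + J * A x)).PosSemidef) :
    AntitoneOn (fun x => RCLike.re (star (g x) ⬝ᵥ (J *ᵥ g x))) s := by
  have hderiv : ∀ x ∈ s, HasDerivWithinAt (fun y => RCLike.re (star (g y) ⬝ᵥ (J *ᵥ g y)))
      (RCLike.re (star (g x) ⬝ᵥ (((A x)ᴴ * J + J * A x) *ᵥ g x))) s x := fun x hx => by
    have h := hasDerivWithinAt_star_dotProduct_mulVec J (hg x hx)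
    rw [star_mulVec, ← dotProduct_mulVec, mulVec_mulVec, mulVec_mulVec, ← dotProduct_add,
      ← add_mulVec] at h
    exact RCLike.reCLM.hasFDerivAt.comp_hasDerivWithinAt x h
  refine antitoneOn_of_hasDerivWithinAt_nonpos hs
    (fun x hx => (hderiv x hx).continuousWithinAt)
    (fun x hx => (hderiv x (interior_subset hx)).mono interior_subset) fun x hx => ?_
  have h := (RCLike.nonneg_iff.1 ((hA x (interior_subset hx)).dotProduct_mulVec_nonneg (g x))).1
  rwa [neg_mulVec, dotProduct_neg, map_neg, neg_nonneg] at h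

theorem mulVec_ne_zero_of_posDef_conjTranspose_mul_self {𝕜 m n : Type*} [RCLike 𝕜] [Fintype m]
    [Fintype n] {P : Matrix m n 𝕜} (hP : (Pᴴ * P).PosDef) {f : n → 𝕜} (hf : f ≠ 0) :
    P *ᵥ f ≠ 0 := by
  intro hPf
  have h := hP.dotProduct_mulVec_pos hf
  rw [← mulVec_mulVec, hPf, mulVec_zero, dotProduct_zero] at h
  exact h.false

section Dirac

variable {m₁ m₂ : ℕ}

theorem jMat_mul_self : jMat m₁ m₂ * jMat m₁ m₂ = 1 := by
  simp [jMat, fromBlocks_multiply, fromBlocks_one]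

theorem conjTranspose_jMat : (jMat m₁ m₂)ᴴ = jMat m₁ m₂ := by
  simp [jMat, fromBlocks_conjTranspose]

theorem conjTranspose_VMat (v : ℝ → Matrix (Fin m₁) (Fin m₂) ℂ) (x : ℝ) :
    (VMat v x)ᴴ = VMat v x := by
  simp [VMat, fromBlocks_conjTranspose]

theorem trace_jMat : (jMat m₁ m₂).trace = m₁ - m₂ := by
  simp [jMat, trace, Fintype.sum_sum_type, sub_eq_add_neg]

theorem trace_jMat_mul_VMat (v : ℝ → Matrix (Fin m₁) (Fin m₂) ℂ) (x : ℝ) :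
    (jMat m₁ m₂ * VMat v x).trace = 0 := by
  simp [jMat, VMat, fromBlocks_multiply, trace, Fintype.sum_sum_type]

theorem star_dotProduct_jMat_mulVec (η : Fin m₁ ⊕ Fin m₂ → ℂ) :
    star η ⬝ᵥ (jMat m₁ m₂ *ᵥ η)
      = star (η ∘ Sum.inl) ⬝ᵥ (η ∘ Sum.inl) - star (η ∘ Sum.inr) ⬝ᵥ (η ∘ Sum.inr) := by
  simp [jMat, fromBlocks_mulVec, neg_mulVec, dotProduct, Fintype.sum_sum_type, sub_eq_add_neg]

noncomputable def diracCoeff (v : ℝ → Matrix (Fin m₁) (Fin m₂) ℂ) (z : ℂ) (x : ℝ) :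
    Matrix (Fin m₁ ⊕ Fin m₂) (Fin m₁ ⊕ Fin m₂) ℂ :=
  Complex.I • (z • jMat m₁ m₂ + jMat m₁ m₂ * VMat v x)

theorem trace_diracCoeff (v : ℝ → Matrix (Fin m₁) (Fin m₂) ℂ) (z : ℂ) (x : ℝ) :
    (diracCoeff v z x).trace = Complex.I * z * (m₁ - m₂) := by
  simp [diracCoeff, trace_jMat, trace_jMat_mul_VMat, mul_assoc]

theorem conjTranspose_diracCoeff_mul_jMat_add (v : ℝ → Matrix (Fin m₁) (Fin m₂) ℂ) (z : ℂ)
    (x : ℝ) : (diracCoeff v z x)ᴴ * jMat m₁ m₂ + jMat m₁ m₂ * diracCoeff v z x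
      = (-2 * z.im) • (1 : Matrix (Fin m₁ ⊕ Fin m₂) (Fin m₁ ⊕ Fin m₂) ℂ) := by
  have hVj : (jMat m₁ m₂ * VMat v x)ᴴ * jMat m₁ m₂ = VMat v x := by
    rw [conjTranspose_mul, conjTranspose_VMat, conjTranspose_jMat, Matrix.mul_assoc,
      jMat_mul_self, Matrix.mul_one]
  have hjV : jMat m₁ m₂ * (jMat m₁ m₂ * VMat v x) = VMat v x := by
    rw [← Matrix.mul_assoc, jMat_mul_self, Matrix.one_mul]
  simp only [diracCoeff, conjTranspose_smul, conjTranspose_add, conjTranspose_jMat,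
    Matrix.add_mul, Matrix.mul_add, Matrix.smul_mul, Matrix.mul_smul, jMat_mul_self, hVj, hjV,
    smul_add, smul_smul]
  have hI : star Complex.I + Complex.I = 0 := by simp
  have hIz : star (Complex.I * z) + Complex.I * z = ((-2 * z.im : ℝ) : ℂ) := by
    apply Complex.ext <;> simp; ring
  rw [add_add_add_comm, ← add_smul, ← add_smul, hI, hIz, zero_smul, add_zero, Complex.coe_smul]

theorem eq_zero_of_comp_inl_eq_zero_of_re_nonneg {η : Fin m₁ ⊕ Fin m₂ → ℂ}
    (hη₁ : η ∘ Sum.inl = 0) (hη : 0 ≤ (star η ⬝ᵥ (jMat m₁ m₂ *ᵥ η)).re) : η = 0 := by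
  rw [star_dotProduct_jMat_mulVec, hη₁, star_zero, zero_dotProduct, zero_sub, Complex.neg_re,
    neg_nonneg] at hη
  have hη₂ : star (η ∘ Sum.inr) ⬝ᵥ (η ∘ Sum.inr) = 0 := by
    have h := Complex.nonneg_iff.1 (dotProduct_star_self_nonneg (η ∘ Sum.inr))
    exact Complex.ext (le_antisymm hη h.1) h.2.symm
  rw [← Sum.elim_comp_inl_inr η, hη₁, dotProduct_star_self_eq_zero.1 hη₂, Sum.elim_zero_zero]

theorem posSemidef_neg_conjTranspose_diracCoeff_mul_jMat_add
    (v : ℝ → Matrix (Fin m₁) (Fin m₂) ℂ) {z : ℂ} (hz : 0 ≤ z.im) (x : ℝ) :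
    (-((diracCoeff v z x)ᴴ * jMat m₁ m₂ + jMat m₁ m₂ * diracCoeff v z x)).PosSemidef := by
  rw [conjTranspose_diracCoeff_mul_jMat_add, ← neg_smul]
  exact PosSemidef.one.smul (by linarith)

end Dirac

theorem det_nonzero_of_property_j_general {m₁ m₂ : ℕ}
    (v : ℝ → Matrix (Fin m₁) (Fin m₂) ℂ)
    (u : ℝ → ℂ → Matrix (Fin m₁ ⊕ Fin m₂) (Fin m₁ ⊕ Fin m₂) ℂ)
    (hu0 : ∀ z : ℂ, u 0 z = 1)
    (hux : ∀ z : ℂ, ∀ x ∈ Ici (0:ℝ), ∀ i k,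
      HasDerivWithinAt (fun y => u y z i k)
        (((Complex.I • (z • jMat m₁ m₂ + jMat m₁ m₂ * VMat v x)) * u x z) i k) (Ici (0:ℝ)) x)
    (P : Matrix (Fin m₁ ⊕ Fin m₂) (Fin m₁) ℂ)
    (hP1 : (Pᴴ * P).PosDef) (hP2 : (Pᴴ * jMat m₁ m₂ * P).PosSemidef) :
    ∀ x ∈ Ici (0:ℝ), ∀ z : ℂ, 0 < z.im →
      ((Matrix.fromCols (1 : Matrix (Fin m₁) (Fin m₁) ℂ) (0 : Matrix (Fin m₁) (Fin m₂) ℂ) :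
        Matrix (Fin m₁) (Fin m₁ ⊕ Fin m₂) ℂ) * (u x z)⁻¹ * P).det ≠ 0 := by
  intro x hx z hz
  have hdet : IsUnit (u x z).det := by
    rw [det_eq_exp_mul_of_hasDerivWithinAt (hux z) (fun y _ => trace_diracCoeff v z y) hx,
      hu0, det_one, mul_one]
    exact (Complex.exp_ne_zero _).isUnit
  rw [Ne, ← exists_mulVec_eq_zero_iff]
  rintro ⟨f, hf0, hf⟩
  set η := (u x z)⁻¹ *ᵥ (P *ᵥ f)
  have hη₁ : η ∘ Sum.inl = 0 := by simpa [η, ← mulVec_mulVec] using hf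
  have huη : u x z *ᵥ η = P *ᵥ f := by
    simp only [η, mulVec_mulVec, ← Matrix.mul_assoc, mul_nonsing_inv _ hdet, Matrix.one_mul]
  have hform := antitoneOn_re_star_dotProduct_mulVec (convex_Ici 0)
    (fun y hy => hasDerivWithinAt_mulVec_apply (hux z y hy) η)
    (fun y _ => posSemidef_neg_conjTranspose_diracCoeff_mul_jMat_add v hz.le y)
    self_mem_Ici hx hx
  simp only [hu0, one_mulVec, huη, RCLike.re_to_complex] at hform
  have hPjP : 0 ≤ (star (P *ᵥ f) ⬝ᵥ (jMat m₁ m₂ *ᵥ (P *ᵥ f))).re := by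
    have h := (Complex.nonneg_iff.1 (hP2.dotProduct_mulVec_nonneg f)).1
    simpa only [star_mulVec, dotProduct_mulVec, vecMul_vecMul, mulVec_mulVec,
      Matrix.mul_assoc] using h
  have hη : η = 0 := eq_zero_of_comp_inl_eq_zero_of_re_nonneg hη₁ (hPjP.trans hform)
  exact mulVec_ne_zero_of_posDef_conjTranspose_mul_self hP1 hf0 (by rw [← huη, hη, mulVec_zero])

/-- For a Dirac system with locally integrable potential and any
nonsingular `𝒫` (`𝒫*𝒫 > 0`) with property-`j` (`𝒫* j 𝒫 ≥ 0`) one has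
`det([I 0] u(x,z)⁻¹ 𝒫) ≠ 0` for all `x ≥ 0`, `z ∈ ℂ₊`. -/
theorem det_nonzero_of_property_j {m₁ m₂ : ℕ}
    (v : ℝ → Matrix (Fin m₁) (Fin m₂) ℂ)
    (hv : ∀ i j, LocallyIntegrableOn (fun x => v x i j) (Ici 0))
    (u : ℝ → ℂ → Matrix (Fin m₁ ⊕ Fin m₂) (Fin m₁ ⊕ Fin m₂) ℂ)
    (hu0 : ∀ z : ℂ, u 0 z = 1)
    (hux : ∀ z : ℂ, ∀ x ∈ Ici (0:ℝ), ∀ i k,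
      HasDerivWithinAt (fun y => u y z i k)
        (((Complex.I • (z • jMat m₁ m₂ + jMat m₁ m₂ * VMat v x)) * u x z) i k) (Ici (0:ℝ)) x)
    (P : Matrix (Fin m₁ ⊕ Fin m₂) (Fin m₁) ℂ)
    (hP1 : (Pᴴ * P).PosDef) (hP2 : (Pᴴ * jMat m₁ m₂ * P).PosSemidef) :
    ∀ x ∈ Ici (0:ℝ), ∀ z : ℂ, 0 < z.im →
      ((Matrix.fromCols (1 : Matrix (Fin m₁) (Fin m₁) ℂ) (0 : Matrix (Fin m₁) (Fin m₂) ℂ) :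
        Matrix (Fin m₁) (Fin m₁ ⊕ Fin m₂) ℂ) * (u x z)⁻¹ * P).det ≠ 0 :=
  det_nonzero_of_property_j_general v u hu0 hux P hP1 hP2
end

section
/- Let ε > 0 and let f be a complex-valued function on the closed square 𝒟(ε) = [0,ε] × [0,ε] (with coordinates (x,t)). If f, f_t and f_{tx} exist and are continuous on 𝒟(ε), and the derivative f_x(x,0) exists for 0 ≤ x ≤ ε, then f_x and f_{xt} exist everywhere on 𝒟(ε) and f_{xt} = f_{tx} on 𝒟(ε). -/
/-!
Integrating `f_t` in `t` and then `f_{tx}` in `x` gives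
`f(x,t) = f(x,0) + ∫₀ᵗ f_t(0,s) ds + ∫₀ˣ ∫₀ᵗ f_{tx}(y,s) ds dy`
after swapping the order of integration (Fubini, `f_{tx}` being continuous on the square).
The inner integral is continuous in `y`, so differentiating in `x` gives
`f_x(x,t) = f_x(x,0) + ∫₀ᵗ f_{tx}(x,s) ds`, whose `t`-derivative is `f_{tx}(x,t)`.
-/

open Set MeasureTheory intervalIntegral

section MixedPartials

variable {E : Type*} [NormedAddCommGroup E] {a b c d x t : ℝ}

theorem ContinuousOn.intervalIntegrable_of_mem_Icc {g : ℝ → E} (hg : ContinuousOn g (Icc a b))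
    {u v : ℝ} (hu : u ∈ Icc a b) (hv : v ∈ Icc a b) : IntervalIntegrable g volume u v :=
  (hg.mono (uIcc_subset_Icc hu hv)).intervalIntegrable

variable [NormedSpace ℝ E]

theorem ContinuousOn.continuousOn_intervalIntegral_of_prod {g : ℝ → ℝ → E}
    (hg : ContinuousOn (Function.uncurry g) (Icc a b ×ˢ Icc c d)) (ht : t ∈ Icc c d) :
    ContinuousOn (fun y => ∫ s in c..t, g y s) (Icc a b) := by
  obtain ⟨C, hC⟩ := (isCompact_Icc.prod isCompact_Icc).exists_bound_of_continuousOn hg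
  have hsub : uIoc c t ⊆ Icc c d :=
    uIoc_subset_uIcc.trans (uIcc_subset_Icc (left_mem_Icc.2 (ht.1.trans ht.2)) ht)
  intro x hx
  refine continuousWithinAt_of_dominated_interval (bound := fun _ => C) ?_ ?_
    intervalIntegrable_const (.of_forall fun s hs => (hg.uncurry_right s (hsub hs)) x hx)
  · filter_upwards [self_mem_nhdsWithin] with y hy
    exact ((hg.uncurry_left y hy).mono hsub).aestronglyMeasurable measurableSet_uIoc
  · filter_upwards [self_mem_nhdsWithin] with y hy
    exact .of_forall fun s hs => hC (y, s) ⟨hy, hsub hs⟩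

theorem intervalIntegral_swap_of_continuousOn {g : ℝ → ℝ → E}
    (hg : ContinuousOn (Function.uncurry g) (Icc a b ×ˢ Icc c d)) {x₁ x₂ t₁ t₂ : ℝ}
    (hx₁ : x₁ ∈ Icc a b) (hx₂ : x₂ ∈ Icc a b) (ht₁ : t₁ ∈ Icc c d) (ht₂ : t₂ ∈ Icc c d) :
    ∫ y in x₁..x₂, ∫ s in t₁..t₂, g y s = ∫ s in t₁..t₂, ∫ y in x₁..x₂, g y s :=
  intervalIntegral_intervalIntegral_swap <|
    ((hg.integrableOn_compact (isCompact_Icc.prod isCompact_Icc)).mono_set <|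
      prod_mono (uIoc_subset_uIcc.trans (uIcc_subset_Icc hx₁ hx₂))
        (uIoc_subset_uIcc.trans (uIcc_subset_Icc ht₁ ht₂)))

variable [CompleteSpace E]

theorem integral_eq_sub_of_hasDerivWithinAt_Icc {f f' : ℝ → E}
    (hf : ∀ u ∈ Icc a b, HasDerivWithinAt f (f' u) (Icc a b) u) (hf' : ContinuousOn f' (Icc a b))
    (hx : x ∈ Icc a b) : ∫ u in a..x, f' u = f x - f a := by
  have hsub : Icc a x ⊆ Icc a b := Icc_subset_Icc_right hx.2
  refine integral_eq_sub_of_hasDeriv_right_of_le hx.1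
    (fun u hu => (hf u (hsub hu)).continuousWithinAt.mono hsub) (fun u hu => ?_)
    (hf'.intervalIntegrable_of_mem_Icc (left_mem_Icc.2 (hx.1.trans hx.2)) hx)
  exact (hf u (hsub (Ioo_subset_Icc_self hu))).mono_of_mem_nhdsWithin
    (Icc_mem_nhdsGT_of_mem ⟨hu.1.le, hu.2.trans_le hx.2⟩)

theorem ContinuousOn.hasDerivWithinAt_integral_Icc {g : ℝ → E} (hg : ContinuousOn g (Icc a b))
    (hx : x ∈ Icc a b) :
    HasDerivWithinAt (fun u => ∫ s in a..u, g s) (g x) (Icc a b) x :=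
  -- needed for the `FTCFilter` instance at `𝓝[Icc a b] x`
  have : Fact (x ∈ Icc a b) := ⟨hx⟩
  integral_hasDerivWithinAt_right
    (hg.intervalIntegrable_of_mem_Icc (left_mem_Icc.2 (hx.1.trans hx.2)) hx)
    ⟨Icc a b, self_mem_nhdsWithin, hg.aestronglyMeasurable measurableSet_Icc⟩ (hg x hx)

variable {f ft ftx : ℝ → ℝ → E}

theorem eq_add_integral_add_integral_integral_of_mixed
    (hft : ∀ x ∈ Icc a b, ∀ t ∈ Icc c d, HasDerivWithinAt (f x) (ft x t) (Icc c d) t)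
    (hftx : ∀ x ∈ Icc a b, ∀ t ∈ Icc c d, HasDerivWithinAt (ft · t) (ftx x t) (Icc a b) x)
    (hftc : ∀ x ∈ Icc a b, ContinuousOn (ft x) (Icc c d))
    (hftxc : ContinuousOn (Function.uncurry ftx) (Icc a b ×ˢ Icc c d))
    (hx : x ∈ Icc a b) (ht : t ∈ Icc c d) :
    f x t = f x c + (∫ s in c..t, ft a s) + ∫ y in a..x, ∫ s in c..t, ftx y s := by
  have ha : a ∈ Icc a b := left_mem_Icc.2 (hx.1.trans hx.2)
  have hc : c ∈ Icc c d := left_mem_Icc.2 (ht.1.trans ht.2)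
  have hft_eq : ∀ s ∈ uIcc c t, ∫ y in a..x, ftx y s = ft x s - ft a s := fun s hs =>
    have hs : s ∈ Icc c d := uIcc_subset_Icc hc ht hs
    integral_eq_sub_of_hasDerivWithinAt_Icc (fun y hy => hftx y hy s hs)
      (hftxc.uncurry_right s hs) hx
  rw [intervalIntegral_swap_of_continuousOn hftxc ha hx hc ht, integral_congr hft_eq,
    integral_sub ((hftc x hx).intervalIntegrable_of_mem_Icc hc ht)
      ((hftc a ha).intervalIntegrable_of_mem_Icc hc ht),
    integral_eq_sub_of_hasDerivWithinAt_Icc (hft x hx) (hftc x hx) ht]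
  abel

theorem hasDerivWithinAt_add_integral_of_mixed {fx : E}
    (hft : ∀ x ∈ Icc a b, ∀ t ∈ Icc c d, HasDerivWithinAt (f x) (ft x t) (Icc c d) t)
    (hftx : ∀ x ∈ Icc a b, ∀ t ∈ Icc c d, HasDerivWithinAt (ft · t) (ftx x t) (Icc a b) x)
    (hftc : ∀ x ∈ Icc a b, ContinuousOn (ft x) (Icc c d))
    (hftxc : ContinuousOn (Function.uncurry ftx) (Icc a b ×ˢ Icc c d))
    (hfx : HasDerivWithinAt (f · c) fx (Icc a b) x) (hx : x ∈ Icc a b) (ht : t ∈ Icc c d) :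
    HasDerivWithinAt (f · t) (fx + ∫ s in c..t, ftx x s) (Icc a b) x :=
  have hinner := (hftxc.continuousOn_intervalIntegral_of_prod ht).hasDerivWithinAt_integral_Icc hx
  ((hfx.add_const _).add hinner).congr_of_mem
    (fun _ hy => eq_add_integral_add_integral_integral_of_mixed hft hftx hftc hftxc hy ht) hx

end MixedPartials

theorem mixed_partials_on_square_general (ε : ℝ)
    (f ft ftx : ℝ → ℝ → ℂ)
    -- f_t exists on 𝒟(ε)
    (hft : ∀ x ∈ Icc (0:ℝ) ε, ∀ t ∈ Icc (0:ℝ) ε,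
      HasDerivWithinAt (fun s => f x s) (ft x t) (Icc (0:ℝ) ε) t)
    -- f_{tx} exists on 𝒟(ε)
    (hftx : ∀ x ∈ Icc (0:ℝ) ε, ∀ t ∈ Icc (0:ℝ) ε,
      HasDerivWithinAt (fun y => ft y t) (ftx x t) (Icc (0:ℝ) ε) x)
    -- f, f_t and f_{tx} are continuous on 𝒟(ε)
    (hftc : ContinuousOn (fun p : ℝ × ℝ => ft p.1 p.2) (Icc 0 ε ×ˢ Icc 0 ε))
    (hftxc : ContinuousOn (fun p : ℝ × ℝ => ftx p.1 p.2) (Icc 0 ε ×ˢ Icc 0 ε))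
    -- f_x(x,0) exists for 0 ≤ x ≤ ε
    (hfx0 : ∀ x ∈ Icc (0:ℝ) ε, ∃ c : ℂ, HasDerivWithinAt (fun y => f y 0) c (Icc (0:ℝ) ε) x) :
    -- conclusion: f_x exists on 𝒟(ε), f_{xt} exists on 𝒟(ε) and f_{xt} = f_{tx}
    ∃ fx : ℝ → ℝ → ℂ,
      (∀ x ∈ Icc (0:ℝ) ε, ∀ t ∈ Icc (0:ℝ) ε,
        HasDerivWithinAt (fun y => f y t) (fx x t) (Icc (0:ℝ) ε) x) ∧
      (∀ x ∈ Icc (0:ℝ) ε, ∀ t ∈ Icc (0:ℝ) ε,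
        HasDerivWithinAt (fun s => fx x s) (ftx x t) (Icc (0:ℝ) ε) t) := by
  choose! fx0 hfx0 using hfx0
  refine ⟨fun y t => fx0 y + ∫ s in (0:ℝ)..t, ftx y s, fun x hx t ht => ?_, fun x hx t ht => ?_⟩
  · exact hasDerivWithinAt_add_integral_of_mixed hft hftx (fun x hx => hftc.uncurry_left x hx)
      hftxc (hfx0 x hx) hx ht
  · exact ((hftxc.uncurry_left x hx).hasDerivWithinAt_integral_Icc ht).const_add (fx0 x)

/-- mixed derivatives on a closed square, Proposition 3.2 of the paper.
If `f`, `f_t` and `f_{tx}` exist and are continuous on `𝒟(ε) = [0,ε] × [0,ε]` (one-sided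
derivatives at the boundary) and `f_x(x,0)` exists for `0 ≤ x ≤ ε`, then `f_x` and `f_{xt}`
exist on `𝒟(ε)` and `f_{xt} = f_{tx}`. -/
theorem mixed_partials_on_square (ε : ℝ) (hε : 0 < ε)
    (f ft ftx : ℝ → ℝ → ℂ)
    -- f_t exists on 𝒟(ε)
    (hft : ∀ x ∈ Icc (0:ℝ) ε, ∀ t ∈ Icc (0:ℝ) ε,
      HasDerivWithinAt (fun s => f x s) (ft x t) (Icc (0:ℝ) ε) t)
    -- f_{tx} exists on 𝒟(ε)
    (hftx : ∀ x ∈ Icc (0:ℝ) ε, ∀ t ∈ Icc (0:ℝ) ε,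
      HasDerivWithinAt (fun y => ft y t) (ftx x t) (Icc (0:ℝ) ε) x)
    -- f, f_t and f_{tx} are continuous on 𝒟(ε)
    (hfc : ContinuousOn (fun p : ℝ × ℝ => f p.1 p.2) (Icc 0 ε ×ˢ Icc 0 ε))
    (hftc : ContinuousOn (fun p : ℝ × ℝ => ft p.1 p.2) (Icc 0 ε ×ˢ Icc 0 ε))
    (hftxc : ContinuousOn (fun p : ℝ × ℝ => ftx p.1 p.2) (Icc 0 ε ×ˢ Icc 0 ε))
    -- f_x(x,0) exists for 0 ≤ x ≤ ε
    (hfx0 : ∀ x ∈ Icc (0:ℝ) ε, ∃ c : ℂ, HasDerivWithinAt (fun y => f y 0) c (Icc (0:ℝ) ε) x) :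
    -- conclusion: f_x exists on 𝒟(ε), f_{xt} exists on 𝒟(ε) and f_{xt} = f_{tx}
    ∃ fx : ℝ → ℝ → ℂ,
      (∀ x ∈ Icc (0:ℝ) ε, ∀ t ∈ Icc (0:ℝ) ε,
        HasDerivWithinAt (fun y => f y t) (fx x t) (Icc (0:ℝ) ε) x) ∧
      (∀ x ∈ Icc (0:ℝ) ε, ∀ t ∈ Icc (0:ℝ) ε,
        HasDerivWithinAt (fun s => fx x s) (ftx x t) (Icc (0:ℝ) ε) t) :=
  mixed_partials_on_square_general ε f ft ftx hft hftx hftc hftxc hfx0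
end

section
/- Let D̂ = diag(d̂₁,…,d̂_m) with d̂₁ > d̂₂ > … > d̂_m > 0, let ζ̂(t) be a continuous m×m skew-Hermitian matrix function on [0,a) with ‖ζ̂(t)‖ ≤ M̂ for all t, and fix 1 ≤ k < m, J_k = diag(I_k, −I_{m−k}). Fix z with Im z < 0 and let R(t) solve R_t = (izD̂ − ζ̂(t)) R, R(0) = I_m. Let ψ be a k×(m−k) matrix with ψ*ψ ≤ I_{m−k}, and assume that [ψ* I_{m−k}] R(t)* J_k R(t) [ψ; I_{m−k}] ≤ 0 for all t ∈ [0,a). Then for all t ∈ [0,a): exp{i(z̄ − z) d̂_{k+1} t − 4M̂ t} · [ψ* I_{m−k}] R(t)* R(t) [ψ; I_{m−k}] ≤ 2 I_{m−k}. -/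
open Matrix Set
open scoped Matrix.Norms.L2Operator ComplexOrder

/-- `J_k = diag(I_k, −I_{m−k})`. -/
noncomputable def Jk (m k : ℕ) : Matrix (Fin m) (Fin m) ℂ :=
  Matrix.diagonal fun i => if (i : ℕ) < k then 1 else -1

/-- The block column `[ψ; I_{m−k}]`. -/
noncomputable def colExt {m k : ℕ} (ψ : Matrix (Fin k) (Fin (m - k)) ℂ) :
    Matrix (Fin m) (Fin (m - k)) ℂ :=
  Matrix.of fun i j =>
    if h : (i : ℕ) < k then ψ ⟨i, h⟩ j else if (i : ℕ) = k + (j : ℕ) then 1 else 0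

/-!
Let `P` be the coordinate projection onto the last `m - k` coordinates, so that `J_k = 1 - 2P`,
and put `w(t) = R(t) [ψ; I] v`. The hypothesis on `J_k` says `‖w‖² ≤ 2‖Pw‖²`. As `P` commutes
with `D̂`,
  `(‖Pw‖²)' = 2 Re⟨Pw, iz D̂ Pw⟩ - 2 Re⟨Pw, P ζ̂ w⟩ ≤ (-2 Im z · d̂_{k+1} + 4M̂) ‖Pw‖²`:
the first term because `d̂_p ≤ d̂_{k+1}` wherever `Pw` lives, the second by Cauchy–Schwarz and
`‖w‖² ≤ 2‖Pw‖²`. Hence `exp(ct) ‖Pw(t)‖²` decreases for `c = 2 Im z · d̂_{k+1} - 4M̂`, and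
`exp(ct) ‖w(t)‖² ≤ 2 exp(ct) ‖Pw(t)‖² ≤ 2 ‖Pw(0)‖² = 2 ‖v‖²`.
(With 0-based indices, `d̂_{k+1}` is `dh ⟨k, hk⟩`.)
-/

open WithLp

theorem antitoneOn_exp_mul_of_hasDerivWithinAt_le {D : Set ℝ} (hD : Convex ℝ D)
    {f f' : ℝ → ℝ} {c : ℝ} (hf : ∀ x ∈ D, HasDerivWithinAt f (f' x) D x)
    (hbound : ∀ x ∈ D, f' x ≤ -c * f x) :
    AntitoneOn (fun x => Real.exp (c * x) * f x) D := by
  have hderiv : ∀ x ∈ D, HasDerivWithinAt (fun x => Real.exp (c * x) * f x)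
      (Real.exp (c * x) * (c * f x + f' x)) D x := fun x hx => by
    have hexp : HasDerivAt (fun x => Real.exp (c * x)) (Real.exp (c * x) * c) x := by
      simpa using ((hasDerivAt_id x).const_mul c).exp
    exact (hexp.hasDerivWithinAt.mul (hf x hx)).congr_deriv (by ring)
  refine antitoneOn_of_hasDerivWithinAt_nonpos hD
    (fun x hx => (hderiv x hx).continuousWithinAt)
    (fun x hx => (hderiv x (interior_subset hx)).mono interior_subset) fun x hx => ?_
  have := hbound x (interior_subset hx)
  exact mul_nonpos_of_nonneg_of_nonpos (Real.exp_pos _).le (by linarith)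

theorem hasDerivWithinAt_toLp_mulVec {𝕜 m n : Type*} [RCLike 𝕜] [Fintype m] [Fintype n]
    {R : ℝ → Matrix m n 𝕜} {R' : Matrix m n 𝕜} {S : Set ℝ} {t : ℝ}
    (hR : ∀ i j, HasDerivWithinAt (fun s => R s i j) (R' i j) S t) (u : n → 𝕜) :
    HasDerivWithinAt (fun s => toLp 2 (R s *ᵥ u)) (toLp 2 (R' *ᵥ u)) S t := by
  have hpi : HasDerivWithinAt (fun s => R s *ᵥ u) (R' *ᵥ u) S t :=
    hasDerivWithinAt_pi.2 fun i => HasDerivWithinAt.fun_sum fun j _ => (hR i j).mul_const (u j)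
  exact (PiLp.hasStrictFDerivAt_toLp (𝕜 := ℝ) 2 _).hasFDerivAt.comp_hasDerivWithinAt t hpi

theorem EuclideanSpace.real_inner_eq_re_inner {ι : Type*} [Fintype ι]
    (x y : EuclideanSpace ℂ ι) : inner ℝ x y = (inner ℂ x y).re := by
  simp [PiLp.inner_apply, Complex.re_sum, Complex.inner]

theorem dotProduct_conjTranspose_mul_mul_mulVec {𝕜 m n : Type*} [RCLike 𝕜] [Fintype m]
    [Fintype n] (B : Matrix m n 𝕜) (A : Matrix m m 𝕜) (v : n → 𝕜) :
    star v ⬝ᵥ ((Bᴴ * A * B) *ᵥ v) = inner 𝕜 (toLp 2 (B *ᵥ v)) (toLp 2 (A *ᵥ (B *ᵥ v))) := by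
  rw [EuclideanSpace.inner_toLp_toLp, star_mulVec, ← mulVec_mulVec, ← mulVec_mulVec,
    dotProduct_mulVec]
  exact dotProduct_comm _ _

theorem posSemidef_smul_one_sub_smul_conjTranspose_mul_self {𝕜 m n : Type*} [RCLike 𝕜]
    [Fintype m] [Fintype n] [DecidableEq n] (B : Matrix m n 𝕜) {α c : ℝ}
    (h : ∀ v, c * ‖toLp 2 (B *ᵥ v)‖ ^ 2 ≤ α * ‖toLp 2 v‖ ^ 2) :
    ((α : 𝕜) • (1 : Matrix n n 𝕜) - (c : 𝕜) • (Bᴴ * B)).PosSemidef := by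
  refine posSemidef_iff_dotProduct_mulVec.2 ⟨?_, fun v => ?_⟩
  · simp [IsHermitian, conjTranspose_sub, conjTranspose_smul]
  · classical
    have hB := dotProduct_conjTranspose_mul_mul_mulVec B 1 v
    rw [Matrix.mul_one, one_mulVec, inner_self_eq_norm_sq_to_K] at hB
    have hv : star v ⬝ᵥ v = (‖toLp 2 v‖ : 𝕜) ^ 2 := by
      rw [← inner_self_eq_norm_sq_to_K, EuclideanSpace.inner_toLp_toLp, dotProduct_comm]
    rw [sub_mulVec, smul_mulVec, smul_mulVec, one_mulVec, dotProduct_sub, dotProduct_smul,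
      dotProduct_smul, hB, hv, smul_eq_mul, smul_eq_mul]
    norm_cast
    exact sub_nonneg.2 (h v)

theorem inner_toEuclideanCLM_diagonal_ofReal {m : ℕ} (d : Fin m → ℝ)
    (y : EuclideanSpace ℂ (Fin m)) :
    inner ℂ y (toEuclideanCLM (𝕜 := ℂ) (diagonal fun i => (d i : ℂ)) y) =
      ((∑ i, d i * ‖y i‖ ^ 2 : ℝ) : ℂ) := by
  simp [PiLp.inner_apply, mulVec_diagonal, mul_assoc, Complex.mul_conj']

section TailProjection

variable {m : ℕ} (k : ℕ)

noncomputable def tailProj : EuclideanSpace ℂ (Fin m) →L[ℂ] EuclideanSpace ℂ (Fin m) :=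
  toEuclideanCLM (𝕜 := ℂ) (diagonal fun i => if k ≤ (i : ℕ) then 1 else 0)

theorem tailProj_apply (x : EuclideanSpace ℂ (Fin m)) (i : Fin m) :
    tailProj k x i = if k ≤ (i : ℕ) then x i else 0 := by
  simp [tailProj, mulVec_diagonal]

theorem norm_sq_tailProj (x : EuclideanSpace ℂ (Fin m)) :
    ‖tailProj k x‖ ^ 2 = ∑ i : Fin m, if k ≤ (i : ℕ) then ‖x i‖ ^ 2 else 0 := by
  simp [EuclideanSpace.norm_sq_eq, tailProj_apply, apply_ite]

theorem norm_tailProj_le (x : EuclideanSpace ℂ (Fin m)) : ‖tailProj k x‖ ≤ ‖x‖ := by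
  refine (pow_le_pow_iff_left₀ (norm_nonneg _) (norm_nonneg _) two_ne_zero).1 ?_
  rw [norm_sq_tailProj, EuclideanSpace.norm_sq_eq]
  gcongr with i
  split_ifs <;> simp

theorem re_inner_Jk (x : EuclideanSpace ℂ (Fin m)) :
    (inner ℂ x (toEuclideanCLM (𝕜 := ℂ) (Jk m k) x)).re = ‖x‖ ^ 2 - 2 * ‖tailProj k x‖ ^ 2 := by
  have hJ : Jk m k = diagonal fun i : Fin m => (((if (i : ℕ) < k then 1 else -1 : ℝ)) : ℂ) := by
    simp only [Jk, apply_ite (fun r : ℝ => (r : ℂ)), Complex.ofReal_one, Complex.ofReal_neg]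
  rw [hJ, inner_toEuclideanCLM_diagonal_ofReal, Complex.ofReal_re, EuclideanSpace.norm_sq_eq,
    norm_sq_tailProj, Finset.mul_sum, ← Finset.sum_sub_distrib]
  refine Finset.sum_congr rfl fun i _ => ?_
  split_ifs <;> first | omega | ring

theorem tailProj_toEuclideanCLM_diagonal (d : Fin m → ℂ) (x : EuclideanSpace ℂ (Fin m)) :
    tailProj k (toEuclideanCLM (𝕜 := ℂ) (diagonal d) x) =
      toEuclideanCLM (𝕜 := ℂ) (diagonal d) (tailProj k x) := by
  ext i
  simp [tailProj_apply, mulVec_diagonal]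

theorem sum_mul_norm_sq_tailProj_le {d : Fin m → ℝ} (hd : Antitone d) (hk : k < m)
    (x : EuclideanSpace ℂ (Fin m)) :
    ∑ i, d i * ‖tailProj k x i‖ ^ 2 ≤ d ⟨k, hk⟩ * ‖tailProj k x‖ ^ 2 := by
  rw [norm_sq_tailProj, Finset.mul_sum]
  refine Finset.sum_le_sum fun i _ => ?_
  rw [tailProj_apply]
  split_ifs with hi
  · exact mul_le_mul_of_nonneg_right (hd (Fin.le_def.2 hi)) (sq_nonneg _)
  · simp

theorem norm_tailProj_colExt (hk : k ≤ m) (ψ : Matrix (Fin k) (Fin (m - k)) ℂ)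
    (v : Fin (m - k) → ℂ) : ‖tailProj k (toLp 2 (colExt ψ *ᵥ v))‖ = ‖toLp 2 v‖ := by
  have hm : k + (m - k) = m := Nat.add_sub_cancel' hk
  have hcol (j : Fin (m - k)) : (colExt ψ *ᵥ v) ((Fin.natAdd k j).cast hm) = v j := by
    simp [colExt, mulVec, dotProduct, ← Fin.ext_iff]
  refine (pow_left_inj₀ (norm_nonneg _) (norm_nonneg _) two_ne_zero).1 ?_
  rw [norm_sq_tailProj, EuclideanSpace.norm_sq_eq, ← Fin.sum_congr' _ hm, Fin.sum_univ_add]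
  simp [hcol, fun i : Fin k => not_le.2 i.isLt]

theorem norm_sq_le_two_mul_norm_sq_tailProj {n : Type*} [Fintype n] {B : Matrix (Fin m) n ℂ}
    (hB : (-(Bᴴ * Jk m k * B)).PosSemidef) (v : n → ℂ) :
    ‖toLp 2 (B *ᵥ v)‖ ^ 2 ≤ 2 * ‖tailProj k (toLp 2 (B *ᵥ v))‖ ^ 2 := by
  have hq := hB.dotProduct_mulVec_nonneg v
  rw [neg_mulVec, dotProduct_neg, dotProduct_conjTranspose_mul_mul_mulVec] at hq
  have hJ := re_inner_Jk k (toLp 2 (B *ᵥ v))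
  rw [toEuclideanCLM_toLp] at hJ
  linarith [(Complex.nonneg_iff.1 hq).1.trans_eq (Complex.neg_re _)]

theorem re_inner_tailProj_le {d : Fin m → ℝ} (hd : Antitone d) (hk : k < m) {z : ℂ}
    (hz : z.im ≤ 0) {ζ : Matrix (Fin m) (Fin m) ℂ} {M : ℝ} (hζ : ‖ζ‖ ≤ M)
    {x : EuclideanSpace ℂ (Fin m)} (hx : ‖x‖ ^ 2 ≤ 2 * ‖tailProj k x‖ ^ 2) :
    (inner ℂ (tailProj k x) (tailProj k (toEuclideanCLM (𝕜 := ℂ)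
        ((Complex.I * z) • diagonal (fun p => (d p : ℂ)) - ζ) x))).re ≤
      (-z.im * d ⟨k, hk⟩ + 2 * M) * ‖tailProj k x‖ ^ 2 := by
  set y := tailProj k x
  have hM : 0 ≤ M := (norm_nonneg ζ).trans hζ
  have hdiag : (inner ℂ y ((Complex.I * z) •
      toEuclideanCLM (𝕜 := ℂ) (diagonal fun p => (d p : ℂ)) y)).re ≤
        -z.im * d ⟨k, hk⟩ * ‖y‖ ^ 2 := by
    rw [inner_smul_right, inner_toEuclideanCLM_diagonal_ofReal]
    simp only [Complex.mul_re, Complex.I_re, Complex.I_im, Complex.ofReal_re, Complex.ofReal_im]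
    nlinarith [sum_mul_norm_sq_tailProj_le k hd hk x]
  have hpert : -(inner ℂ y (tailProj k (toEuclideanCLM (𝕜 := ℂ) ζ x))).re ≤ 2 * M * ‖y‖ ^ 2 :=
    calc -(inner ℂ y (tailProj k (toEuclideanCLM (𝕜 := ℂ) ζ x))).re
        ≤ ‖inner ℂ y (tailProj k (toEuclideanCLM (𝕜 := ℂ) ζ x))‖ :=
          (neg_le_abs _).trans (Complex.abs_re_le_norm _)
      _ ≤ ‖y‖ * ‖tailProj k (toEuclideanCLM (𝕜 := ℂ) ζ x)‖ := norm_inner_le_norm _ _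
      _ ≤ ‖x‖ * (M * ‖x‖) := by
          gcongr
          · exact norm_tailProj_le k x
          · refine (norm_tailProj_le k _).trans ((ContinuousLinearMap.le_opNorm _ x).trans ?_)
            exact mul_le_mul_of_nonneg_right hζ (norm_nonneg x)
      _ ≤ 2 * M * ‖y‖ ^ 2 := by nlinarith
  rw [map_sub, map_smul, _root_.sub_apply, _root_.smul_apply, map_sub, map_smul,
    tailProj_toEuclideanCLM_diagonal, inner_sub_right, Complex.sub_re]
  linarith

theorem antitoneOn_exp_mul_norm_sq_tailProj {D : Set ℝ} (hD : Convex ℝ D) {d : Fin m → ℝ}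
    (hd : Antitone d) (hk : k < m) {z : ℂ} (hz : z.im ≤ 0) {ζ : ℝ → Matrix (Fin m) (Fin m) ℂ}
    {M : ℝ} (hζ : ∀ τ ∈ D, ‖ζ τ‖ ≤ M) {W : ℝ → EuclideanSpace ℂ (Fin m)}
    (hW : ∀ τ ∈ D, HasDerivWithinAt W (toEuclideanCLM (𝕜 := ℂ)
      ((Complex.I * z) • diagonal (fun p => (d p : ℂ)) - ζ τ) (W τ)) D τ)
    (hJ : ∀ τ ∈ D, ‖W τ‖ ^ 2 ≤ 2 * ‖tailProj k (W τ)‖ ^ 2) :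
    AntitoneOn (fun τ => Real.exp ((2 * z.im * d ⟨k, hk⟩ - 4 * M) * τ) *
      ‖tailProj k (W τ)‖ ^ 2) D := by
  refine antitoneOn_exp_mul_of_hasDerivWithinAt_le hD (fun τ hτ =>
    (((tailProj k).restrictScalars ℝ).hasFDerivAt.comp_hasDerivWithinAt τ (hW τ hτ)).norm_sq)
    fun τ hτ => ?_
  simp only [ContinuousLinearMap.coe_restrictScalars', Function.comp_apply,
    EuclideanSpace.real_inner_eq_re_inner]
  nlinarith [re_inner_tailProj_le k hd hk hz (hζ τ hτ) (hJ τ hτ)]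

end TailProjection

theorem exponential_block_estimate_general {m : ℕ} (a : ℝ)
    (dh : Fin m → ℝ) (hdh : StrictAnti dh)
    (Mh : ℝ)
    (ζ : ℝ → Matrix (Fin m) (Fin m) ℂ)
    (hζbdd : ∀ t ∈ Ico (0:ℝ) a, ‖ζ t‖ ≤ Mh)
    (k : ℕ) (hk : k < m)
    (z : ℂ) (hz : z.im < 0)
    (R : ℝ → Matrix (Fin m) (Fin m) ℂ)
    (hR0 : R 0 = 1)
    (hRt : ∀ t ∈ Ico (0:ℝ) a, ∀ i j,
      HasDerivWithinAt (fun s => R s i j)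
        ((((Complex.I * z) • Matrix.diagonal (fun p => (dh p : ℂ)) - ζ t) * R t) i j)
        (Ico (0:ℝ) a) t)
    (ψ : Matrix (Fin k) (Fin (m - k)) ℂ)
    (hJ : ∀ t ∈ Ico (0:ℝ) a,
      (-((colExt ψ)ᴴ * (R t)ᴴ * Jk m k * R t * colExt ψ)).PosSemidef) :
    ∀ t ∈ Ico (0:ℝ) a,
      ((2 : ℂ) • (1 : Matrix (Fin (m - k)) (Fin (m - k)) ℂ) -
        Complex.exp (Complex.I * ((starRingEnd ℂ) z - z) * (dh ⟨k, hk⟩ : ℂ) * (t : ℂ) -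
            4 * (Mh : ℂ) * (t : ℂ)) •
          ((colExt ψ)ᴴ * (R t)ᴴ * R t * colExt ψ)).PosSemidef := by
  intro t ht
  have hgram (τ : ℝ) (A : Matrix (Fin m) (Fin m) ℂ) :
      (colExt ψ)ᴴ * (R τ)ᴴ * A * R τ * colExt ψ = (R τ * colExt ψ)ᴴ * A * (R τ * colExt ψ) := by
    simp [conjTranspose_mul, Matrix.mul_assoc]
  set c := 2 * z.im * dh ⟨k, hk⟩ - 4 * Mh with hc
  have hexp : Complex.exp (Complex.I * ((starRingEnd ℂ) z - z) * (dh ⟨k, hk⟩ : ℂ) * (t : ℂ) -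
      4 * (Mh : ℂ) * (t : ℂ)) = (Real.exp (c * t) : ℂ) := by
    rw [Complex.ofReal_exp, ← neg_sub z, Complex.sub_conj, hc]
    congr 1
    push_cast
    linear_combination (-2 * z.im * dh ⟨k, hk⟩ * t : ℂ) * Complex.I_sq
  rw [hexp, show (colExt ψ)ᴴ * (R t)ᴴ * R t * colExt ψ = (R t * colExt ψ)ᴴ * (R t * colExt ψ) by
    simpa using hgram t 1, show (2 : ℂ) = ((2 : ℝ) : ℂ) by norm_num]
  refine posSemidef_smul_one_sub_smul_conjTranspose_mul_self (α := 2) (c := Real.exp (c * t)) _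
    fun v => ?_
  set W : ℝ → EuclideanSpace ℂ (Fin m) := fun τ => toLp 2 ((R τ * colExt ψ) *ᵥ v)
  have hW : ∀ τ ∈ Ico (0:ℝ) a, HasDerivWithinAt W (toEuclideanCLM (𝕜 := ℂ)
      ((Complex.I * z) • diagonal (fun p => (dh p : ℂ)) - ζ τ) (W τ)) (Ico 0 a) τ :=
    fun τ hτ => by
      simpa only [W, toEuclideanCLM_toLp, ← mulVec_mulVec] using
        hasDerivWithinAt_toLp_mulVec (hRt τ hτ) (colExt ψ *ᵥ v)
  have hJW : ∀ τ ∈ Ico (0:ℝ) a, ‖W τ‖ ^ 2 ≤ 2 * ‖tailProj k (W τ)‖ ^ 2 := fun τ hτ =>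
    norm_sq_le_two_mul_norm_sq_tailProj k (hgram τ _ ▸ hJ τ hτ) v
  have hdecay := antitoneOn_exp_mul_norm_sq_tailProj k (convex_Ico 0 a) hdh.antitone hk hz.le
    hζbdd hW hJW ⟨le_rfl, ht.1.trans_lt ht.2⟩ ht ht.1
  have hW0 : ‖tailProj k (W 0)‖ = ‖toLp 2 v‖ := by
    simpa [W, hR0] using norm_tailProj_colExt k hk.le ψ v
  simp only [mul_zero, Real.exp_zero, one_mul, hW0] at hdecay
  calc Real.exp (c * t) * ‖W t‖ ^ 2
      ≤ Real.exp (c * t) * (2 * ‖tailProj k (W t)‖ ^ 2) := by gcongr; exact hJW t ht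
    _ ≤ 2 * ‖toLp 2 v‖ ^ 2 := by linarith

/-- the estimate (NW42).  If `R_t = (izD̂ − ζ̂(t))R`, `R(0) = I`, with
`D̂` diagonal, strictly decreasing and positive, `ζ̂` continuous skew-Hermitian with
`‖ζ̂(t)‖ ≤ M̂`, `Im z < 0`, and if `ψ` is contractive with
`[ψ* I] R(t)* J_k R(t) [ψ; I] ≤ 0` on `[0,a)`, then
`exp{i(z̄−z)d̂_{k+1}t − 4M̂t}·[ψ* I] R(t)* R(t) [ψ; I] ≤ 2I_{m−k}` on `[0,a)`. -/
theorem exponential_block_estimate {m : ℕ} (a : ℝ) (ha : 0 < a)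
    (dh : Fin m → ℝ) (hdh : StrictAnti dh) (hdhpos : ∀ i, 0 < dh i)
    (Mh : ℝ)
    (ζ : ℝ → Matrix (Fin m) (Fin m) ℂ)
    (hζcont : ∀ i j, ContinuousOn (fun t => ζ t i j) (Ico 0 a))
    (hζsk : ∀ t ∈ Ico (0:ℝ) a, (ζ t)ᴴ = -ζ t)
    (hζbdd : ∀ t ∈ Ico (0:ℝ) a, ‖ζ t‖ ≤ Mh)
    (k : ℕ) (hk1 : 1 ≤ k) (hk : k < m)
    (z : ℂ) (hz : z.im < 0)
    (R : ℝ → Matrix (Fin m) (Fin m) ℂ)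
    (hR0 : R 0 = 1)
    (hRt : ∀ t ∈ Ico (0:ℝ) a, ∀ i j,
      HasDerivWithinAt (fun s => R s i j)
        ((((Complex.I * z) • Matrix.diagonal (fun p => (dh p : ℂ)) - ζ t) * R t) i j)
        (Ico (0:ℝ) a) t)
    (ψ : Matrix (Fin k) (Fin (m - k)) ℂ)
    (hψ : ((1 : Matrix (Fin (m - k)) (Fin (m - k)) ℂ) - ψᴴ * ψ).PosSemidef)
    (hJ : ∀ t ∈ Ico (0:ℝ) a,
      (-((colExt ψ)ᴴ * (R t)ᴴ * Jk m k * R t * colExt ψ)).PosSemidef) :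
    ∀ t ∈ Ico (0:ℝ) a,
      ((2 : ℂ) • (1 : Matrix (Fin (m - k)) (Fin (m - k)) ℂ) -
        Complex.exp (Complex.I * ((starRingEnd ℂ) z - z) * (dh ⟨k, hk⟩ : ℂ) * (t : ℂ) -
            4 * (Mh : ℂ) * (t : ℂ)) •
          ((colExt ψ)ᴴ * (R t)ᴴ * R t * colExt ψ)).PosSemidef :=
  exponential_block_estimate_general a dh hdh Mh ζ hζbdd k hk z hz R hR0 hRt ψ hJ
end

section
/- Let D = diag(d₁,…,d_m) with d₁ > d₂ > … > d_m > 0 and let ζ(x) be an m×m skew-Hermitian matrix function on [0,∞) with ‖ζ(x)‖ ≤ M₀ for all x ≥ 0; let w(x,z) be the fundamental solution of w_x = (izD − ζ(x)) w, w(0,z) = I_m. Fix 1 ≤ k < m and let M_k > 2M₀/(d_k − d_{k+1}). Let 𝒬 be an m×(m−k) matrix with 𝒬*𝒬 > 0 and 𝒬* J_k 𝒬 ≤ 0, where J_k = diag(I_k, −I_{m−k}). Then for all x ≥ 0 and all z with Im z < −M_k, the (m−k)×(m−k) matrix [0 I_{m−k}] w(x,z)^{-1} 𝒬 is invertible, so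 that ψ_k(x,z) := [I_k 0] w(x,z)^{-1} 𝒬 ([0 I_{m−k}] w(x,z)^{-1} 𝒬)^{-1} is well-defined, and ψ_k(x,z)* ψ_k(x,z) ≤ I_{m−k}; equivalently, [ψ_k(x,z)* I_{m−k}] J_k [ψ_k(x,z); I_{m−k}] ≤ 0. -/
open Matrix Set
open scoped Matrix.Norms.L2Operator ComplexOrder

/-- The embedding `Fin (m−k) → Fin m`, `i ↦ k + i`, selecting the lower rows. -/
def lowEmb {m : ℕ} (k : ℕ) (i : Fin (m - k)) : Fin m :=
  ⟨k + i.1, by have := i.isLt; omega⟩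

/-! For a solution `y = w(·, z) y₀` of the system and a signature `S = diag(±1)`, the form
`φ = y* S y` satisfies `φ' ≥ c φ` for a suitable constant `c`: the term `izD` contributes
`2 (−Im z) Σ sᵢ dᵢ |yᵢ|²`, and `ζ` at most `2 M₀ |y|²` in absolute value. Hence `e^{−ct} φ` is
nondecreasing, and `φ(x) ≤ 0` forces `φ(0) ≤ 0`.

With `S = I` this shows that `w(x, z)` is invertible. With `S = J_k` the constant
`c = 2 (−Im z) d_{k+1} + 2 M₀` works as soon as `(−Im z)(d_k − d_{k+1}) ≥ 2 M₀`, which is where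
`Im z < −M_k` enters; applied to `y(x) = 𝒬 v` it shows that `u = w(x, z)⁻¹ 𝒬` satisfies
`u* J_k u ≤ 0`, i.e. `|[I_k 0] u v| ≤ |[0 I_{m−k}] u v|`. Together with the full column rank of
`u` this makes the lower block `b` invertible, and `1 − ψ_k* ψ_k = (b⁻¹)* (u* (−J_k) u) b⁻¹ ≥ 0`. -/

section Blocks

variable {m k : ℕ}

def finSplit (hk : k ≤ m) : Fin k ⊕ Fin (m - k) ≃ Fin m :=
  finSumFinEquiv.trans (finCongr (by omega))

@[simp] lemma finSplit_inl (hk : k ≤ m) (i : Fin k) :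
    finSplit hk (.inl i) = Fin.castLE hk i := rfl

@[simp] lemma finSplit_inr (hk : k ≤ m) (j : Fin (m - k)) :
    finSplit hk (.inr j) = lowEmb k j := rfl

lemma mulVec_eq_zero_of_submatrix_mulVec_eq_zero {n α : Type*} [Fintype n]
    [NonUnitalNonAssocSemiring α] (hk : k ≤ m) {u : Matrix (Fin m) n α} {v : n → α}
    (hup : u.submatrix (Fin.castLE hk) id *ᵥ v = 0) (hlow : u.submatrix (lowEmb k) id *ᵥ v = 0) :
    u *ᵥ v = 0 := by
  funext i
  obtain ⟨j | j, rfl⟩ := (finSplit hk).surjective i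
  · exact congrFun hup j
  · exact congrFun hlow j

lemma conjTranspose_mul_diagonal_mul_eq_add {n α : Type*} [Fintype n] [NonUnitalSemiring α]
    [StarRing α] (hk : k ≤ m) (g : Fin m → α) (u : Matrix (Fin m) n α) :
    uᴴ * diagonal g * u =
      (u.submatrix (Fin.castLE hk) id)ᴴ * diagonal (g ∘ Fin.castLE hk) *
          u.submatrix (Fin.castLE hk) id +
        (u.submatrix (lowEmb k) id)ᴴ * diagonal (g ∘ lowEmb k) * u.submatrix (lowEmb k) id := by
  ext s t
  rw [mul_apply, Matrix.add_apply, mul_apply, mul_apply, ← (finSplit hk).sum_comp,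
    Fintype.sum_sum_type]
  simp [mul_diagonal]

lemma conjTranspose_mul_Jk_mul {n : Type*} [Fintype n] (hk : k ≤ m) (u : Matrix (Fin m) n ℂ) :
    uᴴ * Jk m k * u = (u.submatrix (Fin.castLE hk) id)ᴴ * u.submatrix (Fin.castLE hk) id -
      (u.submatrix (lowEmb k) id)ᴴ * u.submatrix (lowEmb k) id := by
  have hlow : (fun j : Fin (m - k) => if ((lowEmb k j : Fin m) : ℕ) < k then (1 : ℂ) else -1)
      = fun _ => -1 := by
    funext j
    simp [lowEmb]
  rw [Jk, conjTranspose_mul_diagonal_mul_eq_add hk]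
  simp [Function.comp_def, hlow, ← diagonal_neg, sub_eq_add_neg]

@[simp] lemma colExt_submatrix_castLE (hk : k ≤ m) (ψ : Matrix (Fin k) (Fin (m - k)) ℂ) :
    (colExt ψ).submatrix (Fin.castLE hk) id = ψ := by
  ext i j
  simp [colExt]

@[simp] lemma colExt_submatrix_lowEmb (ψ : Matrix (Fin k) (Fin (m - k)) ℂ) :
    (colExt ψ).submatrix (lowEmb k) id = 1 := by
  ext i j
  simp [colExt, lowEmb, one_apply, Fin.ext_iff]

lemma neg_colExt_conjTranspose_mul_Jk_mul (hk : k ≤ m) (ψ : Matrix (Fin k) (Fin (m - k)) ℂ) :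
    -((colExt ψ)ᴴ * Jk m k * colExt ψ) = 1 - ψᴴ * ψ := by
  simp [conjTranspose_mul_Jk_mul hk]

end Blocks

section Contraction

variable {𝕜 n κ : Type*} [RCLike 𝕜] [Fintype n] [Fintype κ]

lemma star_dotProduct_conjTranspose_mul_mulVec {R : Type*} [CommSemiring R] [StarRing R]
    (A : Matrix κ n R) (v : n → R) :
    star v ⬝ᵥ ((Aᴴ * A) *ᵥ v) = star (A *ᵥ v) ⬝ᵥ (A *ᵥ v) := by
  rw [← mulVec_mulVec, dotProduct_mulVec, star_mulVec]

lemma star_dotProduct_conjTranspose_mul_mul_mulVec {R : Type*} [CommSemiring R] [StarRing R]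
    (A : Matrix κ n R) (B : Matrix κ κ R) (v : n → R) :
    star v ⬝ᵥ ((Aᴴ * B * A) *ᵥ v) = star (A *ᵥ v) ⬝ᵥ (B *ᵥ (A *ᵥ v)) := by
  rw [Matrix.mul_assoc, ← mulVec_mulVec, dotProduct_mulVec, star_mulVec, mulVec_mulVec]

lemma eq_zero_of_mulVec_eq_zero_of_posDef {Q : Matrix κ n 𝕜} (hQ : (Qᴴ * Q).PosDef)
    {v : n → 𝕜} (h : Q *ᵥ v = 0) : v = 0 := by
  by_contra hv
  have := hQ.dotProduct_mulVec_pos hv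
  rw [star_dotProduct_conjTranspose_mul_mulVec, h, dotProduct_zero] at this
  exact this.false

lemma isUnit_of_forall_mulVec_eq_zero {K : Type*} [Field K] [DecidableEq n] {A : Matrix n n K}
    (h : ∀ v, A *ᵥ v = 0 → v = 0) : IsUnit A := by
  rw [isUnit_iff_isUnit_det, isUnit_iff_ne_zero]
  intro hdet
  obtain ⟨v, hv, hAv⟩ := exists_mulVec_eq_zero_iff.2 hdet
  exact hv (h v hAv)

variable {a : Matrix κ n 𝕜} {b : Matrix n n 𝕜}

lemma mulVec_eq_zero_of_posSemidef_sub (h : (bᴴ * b - aᴴ * a).PosSemidef) {v : n → 𝕜}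
    (hv : b *ᵥ v = 0) : a *ᵥ v = 0 := by
  have := h.dotProduct_mulVec_nonneg v
  rw [sub_mulVec, dotProduct_sub, star_dotProduct_conjTranspose_mul_mulVec,
    star_dotProduct_conjTranspose_mul_mulVec, hv, dotProduct_zero, zero_sub,
    neg_nonneg] at this
  exact dotProduct_star_self_eq_zero.1 (this.antisymm (dotProduct_star_self_nonneg _))

lemma isUnit_of_posSemidef_sub [DecidableEq n] (hinj : ∀ v, a *ᵥ v = 0 → b *ᵥ v = 0 → v = 0)
    (h : (bᴴ * b - aᴴ * a).PosSemidef) : IsUnit b :=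
  isUnit_of_forall_mulVec_eq_zero fun v hv => hinj v (mulVec_eq_zero_of_posSemidef_sub h hv) hv

lemma posSemidef_one_sub_of_posSemidef_sub [DecidableEq n] (hb : IsUnit b)
    (h : (bᴴ * b - aᴴ * a).PosSemidef) : (1 - (a * b⁻¹)ᴴ * (a * b⁻¹)).PosSemidef := by
  convert h.conjTranspose_mul_mul_same b⁻¹ using 1
  have hbb : b * b⁻¹ = 1 := mul_nonsing_inv b ((isUnit_iff_isUnit_det b).1 hb)
  simp only [Matrix.mul_sub, Matrix.sub_mul, conjTranspose_mul, Matrix.mul_assoc]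
  rw [hbb, Matrix.mul_one, ← conjTranspose_mul, hbb, conjTranspose_one]

end Contraction

section WeightedNormSq

variable {ι : Type*} [Fintype ι]

noncomputable def weightedNormSq (s : ι → ℝ) (y : ι → ℂ) : ℝ := ∑ i, s i * ‖y i‖ ^ 2

lemma star_dotProduct_diagonal_mulVec [DecidableEq ι] (s : ι → ℝ) (y : ι → ℂ) :
    star y ⬝ᵥ (diagonal (fun i => (s i : ℂ)) *ᵥ y) = weightedNormSq s y := by
  simp only [weightedNormSq, dotProduct, mulVec_diagonal, Pi.star_apply, Complex.star_def,
    Complex.ofReal_sum, Complex.ofReal_mul, Complex.ofReal_pow]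
  refine Finset.sum_congr rfl fun i _ => ?_
  rw [← Complex.conj_mul']
  ring

lemma eq_zero_of_weightedNormSq_one_nonpos {y : ι → ℂ} (h : weightedNormSq 1 y ≤ 0) : y = 0 := by
  have hsum : ∑ i, ‖y i‖ ^ 2 = 0 := by
    simp only [weightedNormSq, Pi.one_apply, one_mul] at h
    exact h.antisymm (by positivity)
  funext i
  simpa using (Finset.sum_eq_zero_iff_of_nonneg fun i _ => by positivity).1 hsum i
    (Finset.mem_univ i)

end WeightedNormSq

section Signature

variable {m k : ℕ}

def jSign (k : ℕ) (i : Fin m) : ℝ := if (i : ℕ) < k then 1 else -1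

lemma abs_jSign (i : Fin m) : |jSign k i| = 1 := by
  unfold jSign
  split_ifs <;> simp

lemma Jk_eq_diagonal : Jk m k = diagonal (fun i => (jSign k i : ℂ)) := by
  unfold Jk jSign
  congr 1
  funext i
  split_ifs <;> simp

lemma Jk_isHermitian : (Jk m k).IsHermitian := by
  rw [Jk_eq_diagonal]
  exact isHermitian_diagonal_of_self_adjoint _ (funext fun i => Complex.conj_ofReal _)

lemma posSemidef_neg_conjTranspose_mul_Jk_mul_iff {n : Type*} [Fintype n]
    (u : Matrix (Fin m) n ℂ) :
    (-(uᴴ * Jk m k * u)).PosSemidef ↔ ∀ v, weightedNormSq (jSign k) (u *ᵥ v) ≤ 0 := by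
  rw [posSemidef_iff_dotProduct_mulVec,
    and_iff_right (isHermitian_conjTranspose_mul_mul u Jk_isHermitian).neg]
  simp only [neg_mulVec, dotProduct_neg, star_dotProduct_conjTranspose_mul_mul_mulVec,
    Jk_eq_diagonal, star_dotProduct_diagonal_mulVec, neg_nonneg]
  norm_cast

lemma jSign_mul_le {d : Fin m → ℝ} (hd : Antitone d) {η M₀ : ℝ} (hη : 0 ≤ η) (hk : k < m)
    (hgap : ∀ i : Fin m, (i : ℕ) < k → 2 * M₀ ≤ η * (d i - d ⟨k, hk⟩)) (i : Fin m) :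
    (2 * η * d ⟨k, hk⟩ + 2 * M₀) * jSign k i ≤ 2 * η * d i * jSign k i - 2 * M₀ := by
  by_cases hi : (i : ℕ) < k
  · simp only [jSign, hi, if_true, mul_one]
    linarith [hgap i hi]
  · have hdi : d i ≤ d ⟨k, hk⟩ := hd (Fin.le_def.2 (by simp; omega))
    simp only [jSign, hi, if_false]
    nlinarith

end Signature

lemma nonpos_left_of_mul_le_deriv {φ φ' : ℝ → ℝ} {a b c : ℝ} (hab : a ≤ b)
    (hφ : ∀ t ∈ Icc a b, HasDerivWithinAt φ (φ' t) (Icc a b) t)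
    (hle : ∀ t ∈ Icc a b, c * φ t ≤ φ' t) (hb : φ b ≤ 0) : φ a ≤ 0 := by
  have hg : ∀ t ∈ Icc a b, HasDerivWithinAt (fun t => Real.exp (-c * t) * φ t)
      (Real.exp (-c * t) * (φ' t - c * φ t)) (Icc a b) t := fun t ht => by
    have hexp : HasDerivAt (fun t => Real.exp (-c * t)) (Real.exp (-c * t) * -c) t := by
      simpa using ((hasDerivAt_id t).const_mul (-c)).exp
    exact (hexp.hasDerivWithinAt.mul (hφ t ht)).congr_deriv (by ring)
  have hmono : MonotoneOn (fun t => Real.exp (-c * t) * φ t) (Icc a b) :=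
    monotoneOn_of_hasDerivWithinAt_nonneg (convex_Icc a b)
      (fun t ht => (hg t ht).continuousWithinAt)
      (fun t ht => (hg t (interior_subset ht)).mono interior_subset)
      (fun t ht => mul_nonneg (Real.exp_pos _).le (sub_nonneg.2 (hle t (interior_subset ht))))
  have key : Real.exp (-c * a) * φ a ≤ 0 :=
    (hmono (left_mem_Icc.2 hab) (right_mem_Icc.2 hab) hab).trans
      (mul_nonpos_of_nonneg_of_nonpos (Real.exp_pos _).le hb)
  exact nonpos_of_mul_nonpos_right key (Real.exp_pos _)

section Calculus

open scoped InnerProductSpace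

variable {ι : Type*}

lemma HasDerivWithinAt.weightedNormSq [Fintype ι] {y : ℝ → ι → ℂ} {y' : ι → ℂ} {S : Set ℝ}
    {x : ℝ} (s : ι → ℝ) (hy : ∀ i, HasDerivWithinAt (fun t => y t i) (y' i) S x) :
    HasDerivWithinAt (fun t => weightedNormSq s (y t)) (∑ i, s i * (2 * ⟪y x i, y' i⟫_ℝ)) S x :=
  HasDerivWithinAt.fun_sum fun i _ => (hy i).norm_sq.const_mul (s i)

lemma hasDerivWithinAt_mulVec_apply_s19 {κ : Type*} [Fintype κ] {W : ℝ → Matrix ι κ ℂ}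
    {W' : Matrix ι κ ℂ} {S : Set ℝ} {x : ℝ}
    (hW : ∀ i j, HasDerivWithinAt (fun t => W t i j) (W' i j) S x) (c : κ → ℂ) (i : ι) :
    HasDerivWithinAt (fun t => (W t *ᵥ c) i) ((W' *ᵥ c) i) S x :=
  HasDerivWithinAt.fun_sum fun j _ => (hW i j).mul_const (c j)

variable [Fintype ι] [DecidableEq ι]

lemma sum_mul_inner_mulVec_le {s : ι → ℝ} (hs : ∀ i, |s i| ≤ 1) (ζ : Matrix ι ι ℂ)
    (y : ι → ℂ) : ∑ i, s i * ⟪y i, (ζ *ᵥ y) i⟫_ℝ ≤ ‖ζ‖ * ∑ i, ‖y i‖ ^ 2 := by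
  set Y := (EuclideanSpace.equiv ι ℂ).symm y
  have hY : ‖Y‖ = √(∑ i, ‖y i‖ ^ 2) := EuclideanSpace.norm_eq Y
  calc ∑ i, s i * ⟪y i, (ζ *ᵥ y) i⟫_ℝ
      ≤ ∑ i, ‖y i‖ * ‖(ζ *ᵥ y) i‖ := Finset.sum_le_sum fun i _ =>
        calc s i * ⟪y i, (ζ *ᵥ y) i⟫_ℝ ≤ |s i| * |⟪y i, (ζ *ᵥ y) i⟫_ℝ| := by
              rw [← abs_mul]
              exact le_abs_self _
          _ ≤ 1 * (‖y i‖ * ‖(ζ *ᵥ y) i‖) :=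
              mul_le_mul (hs i) (abs_real_inner_le_norm _ _) (abs_nonneg _) zero_le_one
          _ = ‖y i‖ * ‖(ζ *ᵥ y) i‖ := one_mul _
    _ ≤ ‖Y‖ * ‖(EuclideanSpace.equiv ι ℂ).symm (ζ *ᵥ Y)‖ := by
        rw [hY, EuclideanSpace.norm_eq]
        exact Real.sum_mul_le_sqrt_mul_sqrt _ _ _
    _ ≤ ‖Y‖ * (‖ζ‖ * ‖Y‖) := mul_le_mul_of_nonneg_left (l2_opNorm_mulVec ζ Y) (norm_nonneg _)
    _ = ‖ζ‖ * ∑ i, ‖y i‖ ^ 2 := by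
        rw [hY, mul_left_comm, Real.mul_self_sqrt (by positivity)]

lemma inner_I_mul_mul_self (z : ℂ) (r : ℝ) (a : ℂ) :
    ⟪a, Complex.I * z * (r * a)⟫_ℝ = -z.im * r * ‖a‖ ^ 2 := by
  rw [Complex.inner, ← Complex.normSq_eq_norm_sq]
  simp [Complex.normSq_apply]
  ring

lemma sum_mul_norm_sq_le_sum_mul_inner_ode (d : ι → ℝ) (z : ℂ) (ζ : Matrix ι ι ℂ)
    {s : ι → ℝ} (hs : ∀ i, |s i| ≤ 1) (y : ι → ℂ) :
    ∑ i, (2 * -z.im * d i * s i - 2 * ‖ζ‖) * ‖y i‖ ^ 2 ≤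
      ∑ i, s i * (2 * ⟪y i, (((Complex.I * z) • diagonal (fun p => (d p : ℂ)) - ζ) *ᵥ y) i⟫_ℝ) := by
  have hζ := sum_mul_inner_mulVec_le hs ζ y
  simp only [sub_mulVec, smul_mulVec, mulVec_diagonal, Pi.sub_apply, Pi.smul_apply, smul_eq_mul,
    inner_sub_right, inner_I_mul_mul_self]
  have hL : ∑ i, (2 * -z.im * d i * s i - 2 * ‖ζ‖) * ‖y i‖ ^ 2 =
      ∑ i, 2 * -z.im * d i * s i * ‖y i‖ ^ 2 - 2 * (‖ζ‖ * ∑ i, ‖y i‖ ^ 2) := by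
    simp only [Finset.mul_sum, ← Finset.sum_sub_distrib]
    exact Finset.sum_congr rfl fun i _ => by ring
  have hR : ∑ i, s i * (2 * (-z.im * d i * ‖y i‖ ^ 2 - ⟪y i, (ζ *ᵥ y) i⟫_ℝ)) =
      ∑ i, 2 * -z.im * d i * s i * ‖y i‖ ^ 2 - 2 * ∑ i, s i * ⟪y i, (ζ *ᵥ y) i⟫_ℝ := by
    simp only [Finset.mul_sum, ← Finset.sum_sub_distrib]
    exact Finset.sum_congr rfl fun i _ => by ring
  rw [hL, hR]
  linarith

lemma weightedNormSq_nonpos_left_of_ode {d : ι → ℝ} {z : ℂ} {ζ : ℝ → Matrix ι ι ℂ}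
    {M₀ c a b : ℝ} {s : ι → ℝ} {y : ℝ → ι → ℂ} (hab : a ≤ b) (hs : ∀ i, |s i| ≤ 1)
    (hζ : ∀ t ∈ Icc a b, ‖ζ t‖ ≤ M₀) (hc : ∀ i, c * s i ≤ 2 * -z.im * d i * s i - 2 * M₀)
    (hy : ∀ t ∈ Icc a b, ∀ i, HasDerivWithinAt (fun t => y t i)
      ((((Complex.I * z) • diagonal (fun p => (d p : ℂ)) - ζ t) *ᵥ y t) i) (Icc a b) t)
    (hb : weightedNormSq s (y b) ≤ 0) : weightedNormSq s (y a) ≤ 0 := by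
  refine nonpos_left_of_mul_le_deriv (c := c) hab
    (fun t ht => HasDerivWithinAt.weightedNormSq s (hy t ht)) (fun t ht => ?_) hb
  calc c * weightedNormSq s (y t) = ∑ i, c * s i * ‖y t i‖ ^ 2 := by
        simp only [weightedNormSq, Finset.mul_sum, mul_assoc]
    _ ≤ ∑ i, (2 * -z.im * d i * s i - 2 * ‖ζ t‖) * ‖y t i‖ ^ 2 :=
        Finset.sum_le_sum fun i _ =>
          mul_le_mul_of_nonneg_right (by linarith [hc i, hζ t ht]) (by positivity)
    _ ≤ _ := sum_mul_norm_sq_le_sum_mul_inner_ode d z (ζ t) hs (y t)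

end Calculus

section Fundamental

variable {ι : Type*} [Fintype ι] [DecidableEq ι] {d : ι → ℝ} {ζ : ℝ → Matrix ι ι ℂ} {M₀ : ℝ}
  {w : ℝ → ℂ → Matrix ι ι ℂ} {z : ℂ} {x : ℝ}

lemma weightedNormSq_nonpos_of_fundamental (hζ : ∀ x ∈ Ici (0:ℝ), ‖ζ x‖ ≤ M₀)
    (hw0 : w 0 z = 1)
    (hwx : ∀ x ∈ Ici (0:ℝ), ∀ i j, HasDerivWithinAt (fun y => w y z i j)
      ((((Complex.I * z) • diagonal (fun p => (d p : ℂ)) - ζ x) * w x z) i j) (Ici (0:ℝ)) x)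
    (hx : 0 ≤ x) {s : ι → ℝ} {c : ℝ} (hs : ∀ i, |s i| ≤ 1)
    (hc : ∀ i, c * s i ≤ 2 * -z.im * d i * s i - 2 * M₀) {v : ι → ℂ}
    (hv : weightedNormSq s (w x z *ᵥ v) ≤ 0) : weightedNormSq s v ≤ 0 := by
  have hy : ∀ t ∈ Icc 0 x, ∀ i, HasDerivWithinAt (fun t => (w t z *ᵥ v) i)
      ((((Complex.I * z) • diagonal (fun p => (d p : ℂ)) - ζ t) *ᵥ (w t z *ᵥ v)) i)
      (Icc 0 x) t := fun t ht i => by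
    rw [mulVec_mulVec]
    exact (hasDerivWithinAt_mulVec_apply_s19 (hwx t ht.1) v i).mono Icc_subset_Ici_self
  simpa [hw0] using weightedNormSq_nonpos_left_of_ode hx hs (fun t ht => hζ t ht.1) hc hy hv

lemma isUnit_fundamental (hζ : ∀ x ∈ Ici (0:ℝ), ‖ζ x‖ ≤ M₀) (hw0 : w 0 z = 1)
    (hwx : ∀ x ∈ Ici (0:ℝ), ∀ i j, HasDerivWithinAt (fun y => w y z i j)
      ((((Complex.I * z) • diagonal (fun p => (d p : ℂ)) - ζ x) * w x z) i j) (Ici (0:ℝ)) x)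
    (hx : 0 ≤ x) : IsUnit (w x z) := by
  obtain ⟨μ, hμ⟩ := Finite.exists_ge fun i => -z.im * d i
  refine isUnit_of_forall_mulVec_eq_zero fun v hv => eq_zero_of_weightedNormSq_one_nonpos <|
    weightedNormSq_nonpos_of_fundamental hζ hw0 hwx hx (c := 2 * μ - 2 * M₀) (by simp)
      (fun i => ?_) (by simp [hv, weightedNormSq])
  simp only [Pi.one_apply, mul_one]
  linarith [hμ i]

end Fundamental

/-- well-definedness and contractivity of `ψ_k(x,z)`, cf. (NW13) and
(NW14).  For the system `w_x = (izD − ζ(x))w` with `D` diagonal, strictly decreasing and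
positive, `ζ` skew-Hermitian with `‖ζ(x)‖ ≤ M₀`, for `M_k > 2M₀/(d_k − d_{k+1})` and any
nonsingular `𝒬` with property-`J_k` (`𝒬*𝒬 > 0`, `𝒬*J_k𝒬 ≤ 0`), the matrix
`[0 I] w(x,z)⁻¹ 𝒬` is invertible for `x ≥ 0`, `Im z < −M_k`, and
`ψ_k := [I 0] w⁻¹𝒬 ([0 I] w⁻¹𝒬)⁻¹` satisfies `ψ_k*ψ_k ≤ I`, equivalently
`[ψ_k* I] J_k [ψ_k; I] ≤ 0`. -/
theorem psi_k_well_defined_and_contractive {m : ℕ}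
    (d : Fin m → ℝ) (hd : StrictAnti d)
    (M₀ : ℝ)
    (ζ : ℝ → Matrix (Fin m) (Fin m) ℂ)
    (hζbdd : ∀ x ∈ Ici (0:ℝ), ‖ζ x‖ ≤ M₀)
    (w : ℝ → ℂ → Matrix (Fin m) (Fin m) ℂ)
    (hw0 : ∀ z : ℂ, w 0 z = 1)
    (hwx : ∀ z : ℂ, ∀ x ∈ Ici (0:ℝ), ∀ i j,
      HasDerivWithinAt (fun y => w y z i j)
        ((((Complex.I * z) • Matrix.diagonal (fun p => (d p : ℂ)) - ζ x) * w x z) i j)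
        (Ici (0:ℝ)) x)
    (k : ℕ) (hk : k < m)
    (Mk : ℝ) (hMk : Mk > 2 * M₀ / (d ⟨k - 1, by omega⟩ - d ⟨k, hk⟩))
    (Q : Matrix (Fin m) (Fin (m - k)) ℂ)
    (hQ1 : (Qᴴ * Q).PosDef) (hQ2 : (-(Qᴴ * Jk m k * Q)).PosSemidef) :
    ∀ x ∈ Ici (0:ℝ), ∀ z : ℂ, z.im < -Mk →
      IsUnit (((w x z)⁻¹ * Q).submatrix (lowEmb k) id) ∧
      ((1 : Matrix (Fin (m - k)) (Fin (m - k)) ℂ) -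
        (((w x z)⁻¹ * Q).submatrix (Fin.castLE hk.le) id *
          (((w x z)⁻¹ * Q).submatrix (lowEmb k) id)⁻¹)ᴴ *
        (((w x z)⁻¹ * Q).submatrix (Fin.castLE hk.le) id *
          (((w x z)⁻¹ * Q).submatrix (lowEmb k) id)⁻¹)).PosSemidef ∧
      (-((colExt (((w x z)⁻¹ * Q).submatrix (Fin.castLE hk.le) id *
            (((w x z)⁻¹ * Q).submatrix (lowEmb k) id)⁻¹))ᴴ * Jk m k *
          colExt (((w x z)⁻¹ * Q).submatrix (Fin.castLE hk.le) id *
            (((w x z)⁻¹ * Q).submatrix (lowEmb k) id)⁻¹))).PosSemidef := by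
  intro x hx z hz
  have hdk : d ⟨k, hk⟩ ≤ d ⟨k - 1, by omega⟩ := hd.antitone (Fin.le_def.2 (Nat.sub_le k 1))
  have hM₀ : 0 ≤ M₀ := (norm_nonneg _).trans (hζbdd 0 self_mem_Ici)
  have hη : 0 ≤ -z.im := by linarith [div_nonneg (by linarith : 0 ≤ 2 * M₀) (sub_nonneg.2 hdk)]
  have hgap : ∀ i : Fin m, (i : ℕ) < k → 2 * M₀ ≤ -z.im * (d i - d ⟨k, hk⟩) := fun i hi => by
    have hdi : d ⟨k - 1, by omega⟩ ≤ d i := hd.antitone (Fin.le_def.2 (by simp; omega))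
    have hMkgap := (div_lt_iff₀ (sub_pos.2 (hd (Fin.lt_def.2 (by simp; omega))))).1 hMk
    nlinarith
  set u := (w x z)⁻¹ * Q
  have hwu : w x z * u = Q := by
    rw [← Matrix.mul_assoc, mul_nonsing_inv _ ((isUnit_iff_isUnit_det _).1
      (isUnit_fundamental hζbdd (hw0 z) (hwx z) hx)), Matrix.one_mul]
  have hJ : (-(uᴴ * Jk m k * u)).PosSemidef :=
    (posSemidef_neg_conjTranspose_mul_Jk_mul_iff u).2 fun v =>
      weightedNormSq_nonpos_of_fundamental hζbdd (hw0 z) (hwx z) hx (fun i => (abs_jSign i).le)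
        (jSign_mul_le hd.antitone hη hk hgap) <| by
          rw [mulVec_mulVec, hwu]
          exact (posSemidef_neg_conjTranspose_mul_Jk_mul_iff Q).1 hQ2 v
  rw [conjTranspose_mul_Jk_mul hk.le, neg_sub] at hJ
  have hb := isUnit_of_posSemidef_sub (fun v hup hlow => eq_zero_of_mulVec_eq_zero_of_posDef hQ1 <|
    by rw [← hwu, ← mulVec_mulVec, mulVec_eq_zero_of_submatrix_mulVec_eq_zero hk.le hup hlow,
      mulVec_zero]) hJ
  have hψ := posSemidef_one_sub_of_posSemidef_sub hb hJ
  exact ⟨hb, hψ, by rwa [neg_colExt_conjTranspose_mul_Jk_mul hk.le]⟩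
end
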